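/- arXiv:2007.15261 — 6 statements merged into one kernel-verified Lean document; each statement's English description precedes it below -/
import Mathlib

section
/- Let μ be a finite measure space with indicator 𝟙, and let u : L₁(ν₀) → L₁(μ) be a lattice isometric embedding from the L₁ space of a probability measure ν₀ sending the constant function 1 to a function 𝕀 with support S. Define the measure μ̃ on S by μ̃(B) = ∫_B 𝕀 dμ and the map ũ(h) = (u(h)/𝕀)|_S. Then ũ : L₁(ν₀) → L₁(μ̃) is a measure-preserving lattice isometric embedding, i.e. ∫ ũ(h) dμ̃ = ∫ h dν₀ for all h. -/
/-!
Being `⊔`-preserving, `u` is monotone, and a monotone isometry between L¹ spaces preserves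
integrals, since on nonnegative functions the integral is the norm. Every `u h` vanishes where
`𝕀 = u 1` does: for `h ≥ 0` the truncations `h ⊓ n` tend to `h` in L¹ and
`0 ≤ u (h ⊓ n) ≤ n • u 1`. So `u h / 𝕀` is well defined on the support of `𝕀`, and dividing by
the density `𝕀` carries L¹(μ)-norms, integrals and `⊔` over to L¹(𝕀 μ).
-/

open MeasureTheory Filter Topology

namespace MeasureTheory

variable {α : Type*} [MeasurableSpace α] {ν : Measure α}

lemma L1.norm_eq_integral_of_nonneg {f : Lp ℝ 1 ν} (hf : 0 ≤ f) : ‖f‖ = ∫ x, f x ∂ν := by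
  rw [L1.norm_eq_integral_norm]
  refine integral_congr_ae ?_
  filter_upwards [(Lp.coeFn_nonneg f).mpr hf] with x hx
  exact Real.norm_of_nonneg hx

lemma L1.tendsto_inf_const_atTop [IsFiniteMeasure ν] (f : Lp ℝ 1 ν) :
    Tendsto (fun n : ℕ => f ⊓ Lp.const 1 ν (n : ℝ)) atTop (𝓝 f) := by
  rw [Lp.tendsto_Lp_iff_tendsto_eLpNorm']
  have hcoe : ∀ n : ℕ, eLpNorm (⇑(f ⊓ Lp.const 1 ν (n : ℝ)) - ⇑f) 1 ν =
      ∫⁻ x, ENNReal.ofReal ‖min (f x) n - f x‖ ∂ν := by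
    intro n
    rw [eLpNorm_one_eq_lintegral_enorm]
    refine lintegral_congr_ae ?_
    filter_upwards [Lp.coeFn_inf f (Lp.const 1 ν (n : ℝ)), Lp.coeFn_const 1 ν (n : ℝ)]
      with x hinf hconst
    rw [Pi.sub_apply, hinf, Pi.inf_apply, hconst, ofReal_norm]
    rfl
  simp_rw [hcoe]
  refine tendsto_lintegral_norm_of_dominated_convergence (bound := fun x => ‖f x‖)
    (fun n => ?_) (L1.integrable_coeFn f).norm.hasFiniteIntegral (fun n => ?_) ?_
  · exact (Lp.aestronglyMeasurable f).inf aestronglyMeasurable_const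
  · filter_upwards with x
    rw [Real.norm_eq_abs, Real.norm_eq_abs, abs_le]
    exact ⟨le_min (neg_abs_le _) ((neg_nonpos.mpr (abs_nonneg _)).trans n.cast_nonneg),
      (min_le_left _ _).trans (le_abs_self _)⟩
  · filter_upwards with x
    refine tendsto_const_nhds.congr' ?_
    filter_upwards [eventually_ge_atTop ⌈f x⌉₊] with n hn
    exact (min_eq_left ((Nat.le_ceil _).trans (by exact_mod_cast hn))).symm

lemma Lp.const_nonneg [IsFiniteMeasure ν] {p : ENNReal} {c : ℝ} (hc : 0 ≤ c) :
    0 ≤ Lp.const p ν c := by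
  rw [← Lp.coeFn_nonneg]
  filter_upwards [Lp.coeFn_const p ν c] with x hx
  rw [hx]
  exact hc

variable {β : Type*} [MeasurableSpace β] {μ : Measure β}

theorem ContinuousLinearMap.ae_apply_eq_zero_of_apply_const_eq_zero [IsFiniteMeasure ν]
    (u : Lp ℝ 1 ν →L[ℝ] Lp ℝ 1 μ) (hu : Monotone u) (h : Lp ℝ 1 ν) :
    ∀ᵐ x ∂μ, u (Lp.const 1 ν 1) x = 0 → u h x = 0 := by
  set S := {x | u (Lp.const 1 ν 1) x = 0}
  have hS : MeasurableSet S := (Lp.stronglyMeasurable _).measurable (measurableSet_singleton 0)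
  set R := (LpToLpRestrictCLM β ℝ ℝ μ 1 S).comp u
  have hR : ∀ g, R g = 0 ↔ u g =ᵐ[μ.restrict S] 0 := fun g => by
    rw [Lp.eq_zero_iff_ae_eq_zero]
    exact (LpToLpRestrictCLM_coeFn ℝ S (u g)).congr_left
  have hnonneg : ∀ g, 0 ≤ g → g ∈ LinearMap.ker R.toLinearMap := by
    intro g hg
    refine R.isClosed_ker.mem_of_tendsto (L1.tendsto_inf_const_atTop g)
      (Eventually.of_forall fun n => (hR _).mpr ?_)
    have h0 : 0 ≤ u (g ⊓ Lp.const 1 ν (n : ℝ)) := by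
      simpa using hu (le_inf hg (Lp.const_nonneg n.cast_nonneg))
    have hle : u (g ⊓ Lp.const 1 ν (n : ℝ)) ≤ (n : ℝ) • u (Lp.const 1 ν 1) := by
      have hconst : Lp.const 1 ν (n : ℝ) = (n : ℝ) • Lp.const 1 ν 1 := by
        simpa using (Lp.constₗ 1 ν ℝ).map_smul (n : ℝ) (1 : ℝ)
      rw [← map_smul, ← hconst]
      exact hu inf_le_right
    filter_upwards [ae_restrict_mem hS, ae_restrict_of_ae ((Lp.coeFn_nonneg _).mpr h0),
      ae_restrict_of_ae ((Lp.coeFn_le _ _).mpr hle),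
      ae_restrict_of_ae (Lp.coeFn_smul (n : ℝ) (u (Lp.const 1 ν 1)))]
      with x hxS hx0 hxle hxsmul
    rw [hxsmul, Pi.smul_apply, hxS, smul_zero] at hxle
    exact le_antisymm hxle hx0
  have hker : h ∈ LinearMap.ker R.toLinearMap := by
    rw [← posPart_sub_negPart h]
    exact sub_mem (hnonneg _ (posPart_nonneg h)) (hnonneg _ (negPart_nonneg h))
  exact (ae_restrict_iff' hS).mp ((hR h).mp hker)

theorem LinearIsometry.integral_apply_of_monotone (u : Lp ℝ 1 ν →ₗᵢ[ℝ] Lp ℝ 1 μ) (hu : Monotone u)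
    (h : Lp ℝ 1 ν) : ∫ x, u h x ∂μ = ∫ x, h x ∂ν := by
  have hpos : ∀ g, 0 ≤ g → L1.integral (u g) = L1.integral g := fun g hg => by
    rw [L1.integral_eq_integral, L1.integral_eq_integral, ← L1.norm_eq_integral_of_nonneg hg,
      ← L1.norm_eq_integral_of_nonneg (by simpa using hu hg), u.norm_map]
  rw [← L1.integral_eq_integral, ← L1.integral_eq_integral, ← posPart_sub_negPart h, map_sub,
    L1.integral_sub, L1.integral_sub, hpos _ (posPart_nonneg h), hpos _ (negPart_nonneg h)]

section Density

variable {D f : β → ℝ}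

theorem integral_div_withDensity (hD : AEMeasurable D μ) (hD0 : 0 ≤ᵐ[μ] D)
    (hf : ∀ᵐ x ∂μ, D x = 0 → f x = 0) :
    ∫ x, f x / D x ∂μ.withDensity (fun x => ENNReal.ofReal (D x)) = ∫ x, f x ∂μ := by
  rw [integral_withDensity_eq_integral_toReal_smul₀ hD.ennreal_ofReal
    (Eventually.of_forall fun _ => ENNReal.ofReal_lt_top)]
  refine integral_congr_ae ?_
  filter_upwards [hD0, hf] with x hx0 hx
  rw [ENNReal.toReal_ofReal hx0, smul_eq_mul, mul_div_cancel_of_imp' hx]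

theorem eLpNorm_one_div_withDensity (hD : AEMeasurable D μ) (hD0 : 0 ≤ᵐ[μ] D)
    (hfm : AEMeasurable f μ) (hf : ∀ᵐ x ∂μ, D x = 0 → f x = 0) :
    eLpNorm (fun x => f x / D x) 1 (μ.withDensity (fun x => ENNReal.ofReal (D x))) =
      eLpNorm f 1 μ := by
  rw [eLpNorm_one_eq_lintegral_enorm, eLpNorm_one_eq_lintegral_enorm,
    lintegral_withDensity_eq_lintegral_mul₀ hD.ennreal_ofReal (g := fun x => ‖f x / D x‖ₑ)
      (hfm.div hD).enorm]
  refine lintegral_congr_ae ?_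
  filter_upwards [hD0, hf] with x hx0 hx
  rw [Pi.mul_apply, ← Real.enorm_of_nonneg hx0, ← enorm_mul, mul_div_cancel_of_imp' hx]

theorem MemLp.div_withDensity (hD : AEMeasurable D μ) (hD0 : 0 ≤ᵐ[μ] D) (hfm : MemLp f 1 μ)
    (hf : ∀ᵐ x ∂μ, D x = 0 → f x = 0) :
    MemLp (fun x => f x / D x) 1 (μ.withDensity (fun x => ENNReal.ofReal (D x))) := by
  refine ⟨?_, ?_⟩
  · exact ((hfm.aestronglyMeasurable.aemeasurable.div hD).mono_ac
      (withDensity_absolutelyContinuous _ _)).aestronglyMeasurable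
  · rw [eLpNorm_one_div_withDensity hD hD0 hfm.aestronglyMeasurable.aemeasurable hf]
    exact hfm.eLpNorm_lt_top

variable {E : Type*} [NormedAddCommGroup E] [NormedSpace ℝ E]

noncomputable def LinearIsometry.divDensity (T : E →ₗᵢ[ℝ] Lp ℝ 1 μ) (D : β → ℝ)
    (hD : AEMeasurable D μ) (hD0 : 0 ≤ᵐ[μ] D) (hT : ∀ e, ∀ᵐ x ∂μ, D x = 0 → T e x = 0) :
    E →ₗᵢ[ℝ] Lp ℝ 1 (μ.withDensity fun x => ENNReal.ofReal (D x)) where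
  toFun e := ((Lp.memLp (T e)).div_withDensity hD hD0 (hT e)).toLp _
  map_add' e e' := by
    rw [← MemLp.toLp_add]
    refine MemLp.toLp_congr _ _ ?_
    have hadd : ⇑(T (e + e')) =ᵐ[μ] ⇑(T e) + ⇑(T e') := by
      rw [map_add]
      exact Lp.coeFn_add _ _
    filter_upwards [(withDensity_absolutelyContinuous _ _).ae_le hadd] with x hx
    rw [hx, Pi.add_apply, Pi.add_apply, add_div]
  map_smul' c e := by
    rw [← MemLp.toLp_const_smul]
    refine MemLp.toLp_congr _ _ ?_
    have hsmul : ⇑(T (c • e)) =ᵐ[μ] c • ⇑(T e) := by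
      rw [map_smul]
      exact Lp.coeFn_smul _ _
    filter_upwards [(withDensity_absolutelyContinuous _ _).ae_le hsmul] with x hx
    rw [hx, Pi.smul_apply, Pi.smul_apply, smul_eq_mul, smul_eq_mul, mul_div_assoc,
      RingHom.id_apply]
  norm_map' e := by
    rw [LinearMap.coe_mk, AddHom.coe_mk, Lp.norm_toLp,
      eLpNorm_one_div_withDensity hD hD0 (Lp.aestronglyMeasurable _).aemeasurable (hT e),
      ← Lp.norm_def, T.norm_map]

namespace LinearIsometry

variable (T : E →ₗᵢ[ℝ] Lp ℝ 1 μ) (hD : AEMeasurable D μ) (hD0 : 0 ≤ᵐ[μ] D)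
  (hT : ∀ e, ∀ᵐ x ∂μ, D x = 0 → T e x = 0)

theorem coeFn_divDensity (e : E) :
    T.divDensity D hD hD0 hT e =ᵐ[μ.withDensity fun x => ENNReal.ofReal (D x)]
      fun x => T e x / D x :=
  MemLp.coeFn_toLp ((Lp.memLp (T e)).div_withDensity hD hD0 (hT e))

theorem integral_divDensity (e : E) :
    ∫ x, T.divDensity D hD hD0 hT e x ∂(μ.withDensity fun x => ENNReal.ofReal (D x)) =
      ∫ x, T e x ∂μ :=
  (integral_congr_ae (T.coeFn_divDensity hD hD0 hT e)).trans
    (integral_div_withDensity hD hD0 (hT e))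

theorem divDensity_sup [Lattice E] (hsup : ∀ e e', T (e ⊔ e') = T e ⊔ T e') (e e' : E) :
    T.divDensity D hD hD0 hT (e ⊔ e') =
      T.divDensity D hD hD0 hT e ⊔ T.divDensity D hD hD0 hT e' := by
  have hac := withDensity_absolutelyContinuous μ fun x => ENNReal.ofReal (D x)
  have hTsup : ⇑(T (e ⊔ e')) =ᵐ[μ] ⇑(T e) ⊔ ⇑(T e') := by
    rw [hsup]
    exact Lp.coeFn_sup _ _
  apply Lp.ext
  filter_upwards [T.coeFn_divDensity hD hD0 hT (e ⊔ e'),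
    Lp.coeFn_sup (T.divDensity D hD hD0 hT e) (T.divDensity D hD hD0 hT e'),
    T.coeFn_divDensity hD hD0 hT e, T.coeFn_divDensity hD hD0 hT e', hac.ae_le hTsup,
    hac.ae_le hD0] with x hx hxsup hxe hxe' hxT hx0
  rw [hx, hxsup, Pi.sup_apply, hxe, hxe', hxT, Pi.sup_apply, max_div_div_right hx0]

end LinearIsometry

end Density

end MeasureTheory

theorem renormalized_embedding_general {Ω α₀ : Type}
    [MeasurableSpace Ω] [MeasurableSpace α₀]
    (μ : Measure Ω) (ν₀ : Measure α₀)
    [IsProbabilityMeasure ν₀]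
    (u : Lp ℝ 1 ν₀ →ₗᵢ[ℝ] Lp ℝ 1 μ)
    (hu : ∀ f g : Lp ℝ 1 ν₀, u (f ⊔ g) = u f ⊔ u g)
    (𝕀 : Ω → ℝ) (h𝕀 : (u (MemLp.toLp (fun _ => (1:ℝ)) (memLp_const 1)) : Ω → ℝ) =ᵐ[μ] 𝕀) :
    ∃ u2 : Lp ℝ 1 ν₀ →ₗᵢ[ℝ] Lp ℝ 1 (μ.withDensity (fun x => ENNReal.ofReal (𝕀 x))),
      (∀ f g : Lp ℝ 1 ν₀, u2 (f ⊔ g) = u2 f ⊔ u2 g) ∧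
      (∀ h : Lp ℝ 1 ν₀,
        (u2 h : Ω → ℝ) =ᵐ[μ.withDensity (fun x => ENNReal.ofReal (𝕀 x))]
          fun x => if 𝕀 x ≠ 0 then (u h : Ω → ℝ) x / 𝕀 x else 0) ∧
      (∀ h : Lp ℝ 1 ν₀,
        ∫ x, (u2 h : Ω → ℝ) x ∂(μ.withDensity (fun x => ENNReal.ofReal (𝕀 x))) =
          ∫ y, (h : α₀ → ℝ) y ∂ν₀) := by
  rw [MemLp.toLp_const] at h𝕀
  have hmono : Monotone u := Monotone.of_map_sup hu
  have hD : AEMeasurable 𝕀 μ := (Lp.aestronglyMeasurable _).aemeasurable.congr h𝕀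
  have hD0 : 0 ≤ᵐ[μ] 𝕀 := by
    have h1 : 0 ≤ u (Lp.const 1 ν₀ 1) := by simpa using hmono (Lp.const_nonneg zero_le_one)
    filter_upwards [(Lp.coeFn_nonneg _).mpr h1, h𝕀] with x hx hx𝕀
    exact hx𝕀 ▸ hx
  have hvan : ∀ h, ∀ᵐ x ∂μ, 𝕀 x = 0 → u h x = 0 := fun h => by
    filter_upwards [u.toContinuousLinearMap.ae_apply_eq_zero_of_apply_const_eq_zero hmono h, h𝕀]
      with x hx hx𝕀
    exact hx𝕀 ▸ hx
  refine ⟨u.divDensity 𝕀 hD hD0 hvan, u.divDensity_sup hD hD0 hvan hu, fun h => ?_, fun h => ?_⟩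
  · filter_upwards [u.coeFn_divDensity hD hD0 hvan h] with x hx
    rw [hx]
    split_ifs with h0
    · rfl
    · rw [not_not.mp h0, div_zero]
  · rw [u.integral_divDensity, u.integral_apply_of_monotone hmono]

/-- Renormalization of a lattice isometric embedding into `L₁` of a finite
measure: if `u : L₁(ν₀) → L₁(μ)` is a lattice isometric embedding from `L₁` of
a probability measure sending the constant function `1` to (the class of)
`𝕀`, and `μ̃` is the measure with density `𝕀` with respect to `μ` (which is
carried by the support of `𝕀`), then `h ↦ (u(h)/𝕀)|_{supp 𝕀}` defines a
lattice isometric embedding `u2 : L₁(ν₀) → L₁(μ̃)` which is measure preserving: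
`∫ u2(h) dμ̃ = ∫ h dν₀` for all `h`. -/
theorem renormalized_embedding {Ω α₀ : Type}
    [MeasurableSpace Ω] [MeasurableSpace α₀]
    (μ : Measure Ω) [IsFiniteMeasure μ] (ν₀ : Measure α₀)
    [IsProbabilityMeasure ν₀]
    (u : Lp ℝ 1 ν₀ →ₗᵢ[ℝ] Lp ℝ 1 μ)
    (hu : ∀ f g : Lp ℝ 1 ν₀, u (f ⊔ g) = u f ⊔ u g)
    (𝕀 : Ω → ℝ) (h𝕀 : (u (MemLp.toLp (fun _ => (1:ℝ)) (memLp_const 1)) : Ω → ℝ) =ᵐ[μ] 𝕀) :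
    ∃ u2 : Lp ℝ 1 ν₀ →ₗᵢ[ℝ] Lp ℝ 1 (μ.withDensity (fun x => ENNReal.ofReal (𝕀 x))),
      (∀ f g : Lp ℝ 1 ν₀, u2 (f ⊔ g) = u2 f ⊔ u2 g) ∧
      (∀ h : Lp ℝ 1 ν₀,
        (u2 h : Ω → ℝ) =ᵐ[μ.withDensity (fun x => ENNReal.ofReal (𝕀 x))]
          fun x => if 𝕀 x ≠ 0 then (u h : Ω → ℝ) x / 𝕀 x else 0) ∧
      (∀ h : Lp ℝ 1 ν₀,
        ∫ x, (u2 h : Ω → ℝ) x ∂(μ.withDensity (fun x => ENNReal.ofReal (𝕀 x))) =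
          ∫ y, (h : α₀ → ℝ) y ∂ν₀) :=
  renormalized_embedding_general μ ν₀ u hu 𝕀 h𝕀
end

section
/- Given Banach lattices X₀, X₁, X₂ and lattice homomorphisms T_i : X₀ → X_i for i = 1,2, there exists a Banach lattice PO and lattice homomorphisms S₁ : X₁ → PO and S₂ : X₂ → PO of norm at most 1 with S₁T₁ = S₂T₂, satisfying the universal property: for any Banach lattice Y and lattice homomorphisms R_i : X_i → Y with R₁T₁ = R₂T₂, there is a unique lattice homomorphism γ : PO → Y with γS_i = R_i for i = 1,2, and ‖γ‖ ≤ max{‖R₁‖, ‖R₂‖}. -/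
/-- A lattice homomorphism between Banach lattices: a bounded linear operator
preserving binary suprema (hence all lattice operations). -/
def IsLatticeHom {X Y : Type} [NormedAddCommGroup X] [Lattice X] [HasSolidNorm X] [IsOrderedAddMonoid X] [NormedSpace ℝ X]
    [NormedAddCommGroup Y] [Lattice Y] [HasSolidNorm Y] [IsOrderedAddMonoid Y] [NormedSpace ℝ Y] (f : X →L[ℝ] Y) : Prop :=
  ∀ a b : X, f (a ⊔ b) = f a ⊔ f b

/-!
Instead of a quotient of a free Banach lattice, the push-out is realised inside an `ℓ^∞`-product.
Its factors are all commuting squares `r₁ T₁ = r₂ T₂` of contractive lattice homomorphisms into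
Banach lattices carried by a set of sequences of lattice terms over `X₁ ⊕ X₂`; these squares form
a set. The push-out is the closed vector sublattice of the product generated by the images of `X₁`
and `X₂`. Given `R₁, R₂ : Xᵢ → Y`, the closed vector sublattice of `Y` they generate consists of
limits of evaluated terms, so it injects into sequences of terms; with its norm divided by
`max ‖R₁‖ ‖R₂‖` it is one of the factors, and `γ` is the projection onto that factor. Uniqueness
holds because lattice homomorphisms agreeing on generators agree on all evaluated terms, which are
dense.
-/

open scoped ENNReal

theorem SupClosed.closure {L : Type*} [TopologicalSpace L] [Lattice L] [ContinuousSup L]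
    {s : Set L} (hs : SupClosed s) : SupClosed (closure s) := fun _ ha _ hb =>
  map_mem_closure₂ continuous_sup ha hb fun _ ha' _ hb' => hs ha' hb'

section LpLattice

variable {ι : Type*} {E : ι → Type*} [∀ i, NormedAddCommGroup (E i)] [∀ i, Lattice (E i)]
  [∀ i, HasSolidNorm (E i)] [∀ i, IsOrderedAddMonoid (E i)] {p : ℝ≥0∞}

theorem Memℓp.sup {f g : ∀ i, E i} (hf : Memℓp f p) (hg : Memℓp g p) : Memℓp (f ⊔ g) p :=
  (hf.norm.add hg.norm).mono fun i => norm_sup_le_add (f i) (g i)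

theorem Memℓp.inf {f g : ∀ i, E i} (hf : Memℓp f p) (hg : Memℓp g p) : Memℓp (f ⊓ g) p :=
  (hf.norm.add hg.norm).mono fun i => norm_inf_le_add (f i) (g i)

namespace lp

noncomputable instance instLattice : Lattice (lp E p) :=
  @Subtype.lattice (∀ i, E i) _ (· ∈ lp E p) (fun _ _ => Memℓp.sup) (fun _ _ => Memℓp.inf)

instance instIsOrderedAddMonoid : IsOrderedAddMonoid (lp E p) where
  add_le_add_left _ _ h _ i := add_le_add (h i) le_rfl

instance instHasSolidNorm [Fact (1 ≤ p)] : HasSolidNorm (lp E p) where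
  solid _ _ h := norm_mono (zero_lt_one.trans_le Fact.out).ne' fun i => HasSolidNorm.solid (h i)

end lp

end LpLattice

section LpInftyPi

variable {ι : Type*} {E : ι → Type*} [∀ i, NormedAddCommGroup (E i)] [∀ i, NormedSpace ℝ (E i)]
  {X : Type*} [NormedAddCommGroup X] [NormedSpace ℝ X] (f : ∀ i, X →L[ℝ] E i) {C : ℝ} (hC : 0 ≤ C)
  (hf : ∀ i, ‖f i‖ ≤ C)

noncomputable def ContinuousLinearMap.lpInftyPi : X →L[ℝ] lp E ∞ :=
  LinearMap.mkContinuous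
    { toFun x := ⟨fun i => f i x, memℓp_infty ⟨C * ‖x‖, by
        rintro - ⟨i, rfl⟩; exact (f i).le_of_opNorm_le (hf i) x⟩⟩
      map_add' x y := lp.ext <| funext fun i => map_add (f i) x y
      map_smul' r x := lp.ext <| funext fun i => map_smul (f i) r x }
    C fun x => lp.norm_le_of_forall_le (by positivity) fun i => (f i).le_of_opNorm_le (hf i) x

theorem ContinuousLinearMap.norm_lpInftyPi_le : ‖lpInftyPi f hC hf‖ ≤ C :=
  LinearMap.mkContinuous_norm_le _ hC _

end LpInftyPi

section LatticeHom

variable {X Y Z : Type} [NormedAddCommGroup X] [Lattice X] [HasSolidNorm X] [IsOrderedAddMonoid X]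
  [NormedSpace ℝ X] [NormedAddCommGroup Y] [Lattice Y] [HasSolidNorm Y] [IsOrderedAddMonoid Y]
  [NormedSpace ℝ Y] [NormedAddCommGroup Z] [Lattice Z] [HasSolidNorm Z] [IsOrderedAddMonoid Z]
  [NormedSpace ℝ Z]

theorem IsLatticeHom.comp {g : Y →L[ℝ] Z} {f : X →L[ℝ] Y} (hg : IsLatticeHom g)
    (hf : IsLatticeHom f) : IsLatticeHom (g.comp f) := fun a b => by
  rw [ContinuousLinearMap.comp_apply, hf, hg]; rfl

theorem ContinuousLinearEquiv.isLatticeHom_symm {e : X ≃L[ℝ] Y}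
    (he : IsLatticeHom (e : X →L[ℝ] Y)) : IsLatticeHom (e.symm : Y →L[ℝ] X) := fun a b =>
  e.injective <| by
    have hsup := he (e.symm a) (e.symm b)
    simp only [ContinuousLinearEquiv.coe_coe, ContinuousLinearEquiv.apply_symm_apply] at hsup ⊢
    exact hsup.symm

variable {ι : Type} {E : ι → Type} [∀ i, NormedAddCommGroup (E i)] [∀ i, Lattice (E i)]
  [∀ i, HasSolidNorm (E i)] [∀ i, IsOrderedAddMonoid (E i)] [∀ i, NormedSpace ℝ (E i)]

theorem IsLatticeHom.lpInftyPi {f : ∀ i, X →L[ℝ] E i} {C : ℝ} (hC : 0 ≤ C) (hf : ∀ i, ‖f i‖ ≤ C)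
    (h : ∀ i, IsLatticeHom (f i)) : IsLatticeHom (ContinuousLinearMap.lpInftyPi f hC hf) :=
  fun a b => lp.ext <| funext fun i => h i a b

theorem IsLatticeHom.lpEval (i : ι) : IsLatticeHom (lp.evalCLM ℝ E ∞ i) := fun _ _ => rfl

end LatticeHom

inductive LatticeTerm (α : Type*) : Type _
  | of : α → LatticeTerm α
  | zero : LatticeTerm α
  | add : LatticeTerm α → LatticeTerm α → LatticeTerm α
  | smul : ℝ → LatticeTerm α → LatticeTerm α
  | sup : LatticeTerm α → LatticeTerm α → LatticeTerm α

namespace LatticeTerm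

def eval {α W : Type*} [AddCommGroup W] [Module ℝ W] [Lattice W] (φ : α → W) :
    LatticeTerm α → W
  | of a => φ a
  | zero => 0
  | add s t => eval φ s + eval φ t
  | smul r t => r • eval φ t
  | sup s t => eval φ s ⊔ eval φ t

variable {α : Type*} {X Y : Type} [NormedAddCommGroup X] [Lattice X] [HasSolidNorm X]
  [IsOrderedAddMonoid X] [NormedSpace ℝ X] [NormedAddCommGroup Y] [Lattice Y] [HasSolidNorm Y]
  [IsOrderedAddMonoid Y] [NormedSpace ℝ Y]

theorem map_eval {f : X →L[ℝ] Y} (hf : IsLatticeHom f) (ψ : α → X) (t : LatticeTerm α) :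
    f (eval ψ t) = eval (f ∘ ψ) t := by
  induction t with
  | of a => rfl
  | zero => exact map_zero f
  | add s t hs ht => rw [eval, map_add, hs, ht, eval]
  | smul r t ht => rw [eval, map_smul, ht, eval]
  | sup s t hs ht => rw [eval, hf, hs, ht, eval]

end LatticeTerm

open LatticeTerm

theorem IsLatticeHom.ext_of_denseRange_eval {α : Type*} {X Y : Type} [NormedAddCommGroup X]
    [Lattice X] [HasSolidNorm X] [IsOrderedAddMonoid X] [NormedSpace ℝ X] [NormedAddCommGroup Y]
    [Lattice Y] [HasSolidNorm Y] [IsOrderedAddMonoid Y] [NormedSpace ℝ Y] {ψ : α → X}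
    (hψ : DenseRange (eval ψ)) {f g : X →L[ℝ] Y} (hf : IsLatticeHom f) (hg : IsLatticeHom g)
    (h : ∀ a, f (ψ a) = g (ψ a)) : f = g := by
  have hfg : f ∘ ψ = g ∘ ψ := funext h
  refine DFunLike.coe_injective (f.continuous.ext_on hψ g.continuous ?_)
  rintro _ ⟨t, rfl⟩
  rw [map_eval hf, map_eval hg, hfg]

section LatticeSpan

variable {α W : Type*} [AddCommGroup W] [Module ℝ W] [Lattice W]

def latticeSpan (φ : α → W) : Submodule ℝ W where
  carrier := Set.range (eval φ)
  add_mem' := by rintro _ _ ⟨s, rfl⟩ ⟨t, rfl⟩; exact ⟨add s t, rfl⟩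
  zero_mem' := ⟨zero, rfl⟩
  smul_mem' := by rintro r _ ⟨t, rfl⟩; exact ⟨smul r t, rfl⟩

theorem supClosed_latticeSpan (φ : α → W) : SupClosed (latticeSpan φ : Set W) := by
  rintro _ ⟨s, rfl⟩ _ ⟨t, rfl⟩; exact ⟨sup s t, rfl⟩

end LatticeSpan

section ClosedLatticeSpan

variable {α W : Type*} [NormedAddCommGroup W] [NormedSpace ℝ W] [Lattice W]

def closedLatticeSpan (φ : α → W) : Submodule ℝ W := (latticeSpan φ).topologicalClosure

theorem eval_mem_closedLatticeSpan (φ : α → W) (t : LatticeTerm α) :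
    eval φ t ∈ closedLatticeSpan φ :=
  (latticeSpan φ).le_topologicalClosure ⟨t, rfl⟩

theorem apply_mem_closedLatticeSpan (φ : α → W) (a : α) : φ a ∈ closedLatticeSpan φ :=
  eval_mem_closedLatticeSpan φ (of a)

theorem supClosed_closedLatticeSpan [ContinuousSup W] (φ : α → W) :
    SupClosed (closedLatticeSpan φ : Set W) :=
  (supClosed_latticeSpan φ).closure

theorem closedLatticeSpan.exists_injective_seq (φ : α → W) :
    ∃ e : closedLatticeSpan φ → ℕ → LatticeTerm α, e.Injective := by
  have h : ∀ y : closedLatticeSpan φ, ∃ u : ℕ → LatticeTerm α,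
      Filter.Tendsto (fun n => eval φ (u n)) Filter.atTop (nhds (y : W)) := by
    intro y
    obtain ⟨x, hx, hlim⟩ := mem_closure_iff_seq_limit.1 y.2
    choose u hu using hx
    exact ⟨u, by simpa only [hu] using hlim⟩
  choose e he using h
  exact ⟨e, fun y y' hyy' => Subtype.ext (tendsto_nhds_unique (he y) (hyy' ▸ he y'))⟩

end ClosedLatticeSpan

namespace closedLatticeSpan

variable {α W : Type*} [NormedAddCommGroup W] [NormedSpace ℝ W] [Lattice W] [HasSolidNorm W]
  [IsOrderedAddMonoid W] (φ : α → W)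

noncomputable instance : Lattice (closedLatticeSpan φ) :=
  Subtype.lattice (fun _ _ ha hb => supClosed_closedLatticeSpan φ ha hb) fun a b ha hb => by
    rw [eq_sub_of_add_eq (inf_add_sup a b)]
    exact sub_mem (add_mem ha hb) (supClosed_closedLatticeSpan φ ha hb)

instance : IsOrderedAddMonoid (closedLatticeSpan φ) where
  add_le_add_left _ _ h c := add_le_add_left h c

instance : HasSolidNorm (closedLatticeSpan φ) where
  solid _ _ h := HasSolidNorm.solid (α := W) h

instance [CompleteSpace W] : CompleteSpace (closedLatticeSpan φ) :=
  (latticeSpan φ).isClosed_topologicalClosure.completeSpace_coe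

def gen (a : α) : closedLatticeSpan φ := ⟨φ a, apply_mem_closedLatticeSpan φ a⟩

end closedLatticeSpan

namespace closedLatticeSpan

variable {α : Type*} {W : Type} [NormedAddCommGroup W] [NormedSpace ℝ W] [Lattice W] [HasSolidNorm W]
  [IsOrderedAddMonoid W] (φ : α → W)

theorem isLatticeHom_subtypeL : IsLatticeHom (closedLatticeSpan φ).subtypeL := fun _ _ => rfl

theorem denseRange_eval_gen : DenseRange (eval (gen φ)) := by
  have hval (t : LatticeTerm α) : ((eval (gen φ) t : closedLatticeSpan φ) : W) = eval φ t :=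
    map_eval (isLatticeHom_subtypeL φ) (gen φ) t
  rw [DenseRange, Subtype.dense_iff, ← Set.range_comp, Function.comp_def]
  simp only [hval]
  exact subset_rfl

end closedLatticeSpan

theorem exists_banachLattice_equiv {α Y : Type} [NormedAddCommGroup Y] [Lattice Y] [HasSolidNorm Y]
    [IsOrderedAddMonoid Y] [NormedSpace ℝ Y] [CompleteSpace Y] (g : α ≃ Y) {c : ℝ} (hc : 0 < c) :
    ∃ (_ : NormedAddCommGroup α) (_ : Lattice α) (_ : HasSolidNorm α) (_ : IsOrderedAddMonoid α)
      (_ : NormedSpace ℝ α) (_ : CompleteSpace α) (ψ : α ≃L[ℝ] Y),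
      IsLatticeHom (ψ : α →L[ℝ] Y) ∧ IsLatticeHom (ψ.symm : Y →L[ℝ] α) ∧
        ‖(ψ : α →L[ℝ] Y)‖ ≤ c ∧ ‖(ψ.symm : Y →L[ℝ] α)‖ ≤ c⁻¹ := by
  let := g.addCommGroup
  let := g.module ℝ
  let L : α ≃ₗ[ℝ] Y := g.linearEquiv ℝ
  let f : α →ₗ[ℝ] Y := c⁻¹ • (L : α →ₗ[ℝ] Y)
  have hf : f.toFun.Injective := (smul_right_injective Y (inv_ne_zero hc.ne')).comp L.injective
  let : NormedAddCommGroup α := NormedAddCommGroup.induced α Y f hf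
  let : NormedSpace ℝ α := NormedSpace.induced ℝ α Y f
  let := g.lattice
  have hnorm (a : α) : ‖a‖ = c⁻¹ * ‖g a‖ := by
    rw [← abs_of_pos (inv_pos.2 hc), ← Real.norm_eq_abs, ← norm_smul]; rfl
  have hsup (a b : α) : g (a ⊔ b) = g a ⊔ g b := g.apply_symm_apply _
  have habs (a : α) : g |a| = |g a| := by
    rw [abs, abs, hsup]; exact congrArg _ (map_neg L a)
  have : IsOrderedAddMonoid α :=
    { add_le_add_left a b (h : g a ≤ g b) d := by
        show L (a + d) ≤ L (b + d)
        rw [map_add, map_add]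
        exact add_le_add_left h (L d) }
  have : HasSolidNorm α :=
    ⟨fun a b (h : g |a| ≤ g |b|) => by
      rw [hnorm, hnorm]
      gcongr
      exact HasSolidNorm.solid (by rwa [habs, habs] at h)⟩
  have : CompleteSpace α := by
    refine ((AddMonoidHomClass.isometry_of_norm f fun _ => rfl).isUniformInducing.completeSpace_congr
      fun y => ⟨L.symm (c • y), ?_⟩).2 inferInstance
    simp [f, smul_smul, hc.ne']
  have hnorm_apply (a : α) : ‖g a‖ = c * ‖a‖ := by rw [hnorm, mul_inv_cancel_left₀ hc.ne']
  have hnorm_symm_apply (y : Y) : ‖g.symm y‖ = c⁻¹ * ‖y‖ := by rw [hnorm, g.apply_symm_apply]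
  let ψ : α ≃L[ℝ] Y := L.toContinuousLinearEquivOfBounds c c⁻¹
    (fun a => (hnorm_apply a).le) (fun y => (hnorm_symm_apply y).le)
  exact ⟨inferInstance, inferInstance, inferInstance, inferInstance, inferInstance,
    inferInstance, ψ, hsup, ψ.isLatticeHom_symm hsup,
    ψ.toContinuousLinearMap.opNorm_le_bound hc.le fun a => (hnorm_apply a).le,
    ψ.symm.toContinuousLinearMap.opNorm_le_bound (inv_nonneg.2 hc.le) fun y =>
      (hnorm_symm_apply y).le⟩

section Pushout

variable {X₀ X₁ X₂ : Type} [NormedAddCommGroup X₀] [NormedSpace ℝ X₀]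
  [NormedAddCommGroup X₁] [Lattice X₁] [HasSolidNorm X₁] [IsOrderedAddMonoid X₁] [NormedSpace ℝ X₁]
  [NormedAddCommGroup X₂] [Lattice X₂] [HasSolidNorm X₂] [IsOrderedAddMonoid X₂] [NormedSpace ℝ X₂]
  (T₁ : X₀ →L[ℝ] X₁) (T₂ : X₀ →L[ℝ] X₂)

/-- The carrier is a subset of one fixed type so that these cocones form a `Type`, over which
an `ℓ^∞`-product can be taken. -/
structure SmallCocone where
  carrier : Set (ℕ → LatticeTerm (X₁ ⊕ X₂))
  [normedAddCommGroup : NormedAddCommGroup carrier]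
  [lattice : Lattice carrier]
  [hasSolidNorm : HasSolidNorm carrier]
  [isOrderedAddMonoid : IsOrderedAddMonoid carrier]
  [normedSpace : NormedSpace ℝ carrier]
  [completeSpace : CompleteSpace carrier]
  r₁ : X₁ →L[ℝ] carrier
  r₂ : X₂ →L[ℝ] carrier
  isLatticeHom_r₁ : IsLatticeHom r₁
  isLatticeHom_r₂ : IsLatticeHom r₂
  norm_r₁_le : ‖r₁‖ ≤ 1
  norm_r₂_le : ‖r₂‖ ≤ 1
  comp_eq : r₁.comp T₁ = r₂.comp T₂

attribute [instance] SmallCocone.normedAddCommGroup SmallCocone.lattice SmallCocone.hasSolidNorm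
  SmallCocone.isOrderedAddMonoid SmallCocone.normedSpace SmallCocone.completeSpace

namespace SmallCocone

noncomputable def prodMap₁ : X₁ →L[ℝ] lp (fun i : SmallCocone T₁ T₂ => i.carrier) ∞ :=
  ContinuousLinearMap.lpInftyPi (fun i => i.r₁) zero_le_one fun i => i.norm_r₁_le

noncomputable def prodMap₂ : X₂ →L[ℝ] lp (fun i : SmallCocone T₁ T₂ => i.carrier) ∞ :=
  ContinuousLinearMap.lpInftyPi (fun i => i.r₂) zero_le_one fun i => i.norm_r₂_le

theorem norm_prodMap₁_le : ‖prodMap₁ T₁ T₂‖ ≤ 1 :=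
  ContinuousLinearMap.norm_lpInftyPi_le _ _ _

theorem norm_prodMap₂_le : ‖prodMap₂ T₁ T₂‖ ≤ 1 :=
  ContinuousLinearMap.norm_lpInftyPi_le _ _ _

theorem isLatticeHom_prodMap₁ : IsLatticeHom (prodMap₁ T₁ T₂) :=
  IsLatticeHom.lpInftyPi _ _ fun i => i.isLatticeHom_r₁

theorem isLatticeHom_prodMap₂ : IsLatticeHom (prodMap₂ T₁ T₂) :=
  IsLatticeHom.lpInftyPi _ _ fun i => i.isLatticeHom_r₂

variable {T₁ T₂} {Y : Type} [NormedAddCommGroup Y] [Lattice Y] [HasSolidNorm Y]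
  [IsOrderedAddMonoid Y] [NormedSpace ℝ Y] [CompleteSpace Y] {R₁ : X₁ →L[ℝ] Y} {R₂ : X₂ →L[ℝ] Y}

theorem exists_of_injective {e : Y → ℕ → LatticeTerm (X₁ ⊕ X₂)} (he : e.Injective)
    (hR₁ : IsLatticeHom R₁) (hR₂ : IsLatticeHom R₂) (hR : R₁.comp T₁ = R₂.comp T₂) {c : ℝ}
    (hc : 0 < c) (h₁ : ‖R₁‖ ≤ c) (h₂ : ‖R₂‖ ≤ c) :
    ∃ (i : SmallCocone T₁ T₂) (ψ : i.carrier →L[ℝ] Y), IsLatticeHom ψ ∧ ‖ψ‖ ≤ c ∧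
      ψ.comp i.r₁ = R₁ ∧ ψ.comp i.r₂ = R₂ := by
  obtain ⟨_, _, _, _, _, _, ψ, hψ, hψsymm, hψ_norm, hψsymm_norm⟩ :=
    exists_banachLattice_equiv (Equiv.ofInjective e he).symm hc
  have hr_norm {X : Type} [NormedAddCommGroup X] [NormedSpace ℝ X] {R : X →L[ℝ] Y} (h : ‖R‖ ≤ c) :
      ‖(ψ.symm : Y →L[ℝ] Set.range e).comp R‖ ≤ 1 :=
    calc _ ≤ c⁻¹ * c := (ContinuousLinearMap.opNorm_comp_le _ _).trans
            (mul_le_mul hψsymm_norm h (norm_nonneg _) (inv_nonneg.2 hc.le))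
      _ = 1 := inv_mul_cancel₀ hc.ne'
  refine ⟨⟨Set.range e, (ψ.symm : Y →L[ℝ] Set.range e).comp R₁,
    (ψ.symm : Y →L[ℝ] Set.range e).comp R₂, hψsymm.comp hR₁, hψsymm.comp hR₂, hr_norm h₁,
    hr_norm h₂, ?_⟩, ψ, hψ, hψ_norm, ?_, ?_⟩
  · rw [ContinuousLinearMap.comp_assoc, hR, ContinuousLinearMap.comp_assoc]
  · ext x; exact ψ.apply_symm_apply (R₁ x)
  · ext x; exact ψ.apply_symm_apply (R₂ x)

end SmallCocone

noncomputable def pushoutGen : X₁ ⊕ X₂ → lp (fun i : SmallCocone T₁ T₂ => i.carrier) ∞ :=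
  Sum.elim (SmallCocone.prodMap₁ T₁ T₂) (SmallCocone.prodMap₂ T₁ T₂)

abbrev Pushout : Type := closedLatticeSpan (pushoutGen T₁ T₂)

namespace Pushout

noncomputable def inl : X₁ →L[ℝ] Pushout T₁ T₂ :=
  (SmallCocone.prodMap₁ T₁ T₂).codRestrict _ fun x => apply_mem_closedLatticeSpan _ (Sum.inl x)

noncomputable def inr : X₂ →L[ℝ] Pushout T₁ T₂ :=
  (SmallCocone.prodMap₂ T₁ T₂).codRestrict _ fun x => apply_mem_closedLatticeSpan _ (Sum.inr x)

theorem isLatticeHom_inl : IsLatticeHom (inl T₁ T₂) := fun a b =>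
  Subtype.ext (SmallCocone.isLatticeHom_prodMap₁ T₁ T₂ a b)

theorem isLatticeHom_inr : IsLatticeHom (inr T₁ T₂) := fun a b =>
  Subtype.ext (SmallCocone.isLatticeHom_prodMap₂ T₁ T₂ a b)

theorem norm_inl_le : ‖inl T₁ T₂‖ ≤ 1 :=
  (inl T₁ T₂).opNorm_le_bound zero_le_one
    ((SmallCocone.prodMap₁ T₁ T₂).le_of_opNorm_le (SmallCocone.norm_prodMap₁_le T₁ T₂))

theorem norm_inr_le : ‖inr T₁ T₂‖ ≤ 1 :=
  (inr T₁ T₂).opNorm_le_bound zero_le_one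
    ((SmallCocone.prodMap₂ T₁ T₂).le_of_opNorm_le (SmallCocone.norm_prodMap₂_le T₁ T₂))

theorem inl_comp_eq : (inl T₁ T₂).comp T₁ = (inr T₁ T₂).comp T₂ := by
  refine ContinuousLinearMap.ext fun z => Subtype.ext <| lp.ext <| funext fun i => ?_
  exact DFunLike.congr_fun i.comp_eq z

variable {T₁ T₂} {Y : Type} [NormedAddCommGroup Y] [Lattice Y] [HasSolidNorm Y]
  [IsOrderedAddMonoid Y] [NormedSpace ℝ Y]

theorem hom_ext {γ γ' : Pushout T₁ T₂ →L[ℝ] Y} (hγ : IsLatticeHom γ) (hγ' : IsLatticeHom γ')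
    (h₁ : γ.comp (inl T₁ T₂) = γ'.comp (inl T₁ T₂))
    (h₂ : γ.comp (inr T₁ T₂) = γ'.comp (inr T₁ T₂)) : γ = γ' := by
  refine hγ.ext_of_denseRange_eval (closedLatticeSpan.denseRange_eval_gen (pushoutGen T₁ T₂)) hγ' ?_
  rintro (x | x)
  · exact DFunLike.congr_fun h₁ x
  · exact DFunLike.congr_fun h₂ x

variable [CompleteSpace Y] {R₁ : X₁ →L[ℝ] Y} {R₂ : X₂ →L[ℝ] Y}

theorem exists_desc_of_norm_le (hR₁ : IsLatticeHom R₁) (hR₂ : IsLatticeHom R₂)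
    (hR : R₁.comp T₁ = R₂.comp T₂) {c : ℝ} (hc : 0 < c) (h₁ : ‖R₁‖ ≤ c) (h₂ : ‖R₂‖ ≤ c) :
    ∃ γ : Pushout T₁ T₂ →L[ℝ] Y, IsLatticeHom γ ∧ γ.comp (inl T₁ T₂) = R₁ ∧
      γ.comp (inr T₁ T₂) = R₂ ∧ ‖γ‖ ≤ c := by
  let K := closedLatticeSpan (Sum.elim R₁ R₂)
  obtain ⟨e, he⟩ := closedLatticeSpan.exists_injective_seq (Sum.elim R₁ R₂)
  let R₁' : X₁ →L[ℝ] K :=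
    R₁.codRestrict K fun x => apply_mem_closedLatticeSpan (Sum.elim R₁ R₂) (.inl x)
  let R₂' : X₂ →L[ℝ] K :=
    R₂.codRestrict K fun x => apply_mem_closedLatticeSpan (Sum.elim R₁ R₂) (.inr x)
  obtain ⟨i, ψ, hψ, hψ_norm, hψ₁, hψ₂⟩ := SmallCocone.exists_of_injective he
    (R₁ := R₁') (R₂ := R₂') (fun a b => Subtype.ext (hR₁ a b)) (fun a b => Subtype.ext (hR₂ a b))
    (ContinuousLinearMap.ext fun z => Subtype.ext (DFunLike.congr_fun hR z)) hc
    (R₁'.opNorm_le_bound hc.le (R₁.le_of_opNorm_le h₁))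
    (R₂'.opNorm_le_bound hc.le (R₂.le_of_opNorm_le h₂))
  refine ⟨K.subtypeL.comp (ψ.comp ((lp.evalCLM ℝ _ ∞ i).comp
    (closedLatticeSpan (pushoutGen T₁ T₂)).subtypeL)), ?_, ?_, ?_, ?_⟩
  · exact (closedLatticeSpan.isLatticeHom_subtypeL _).comp
      (hψ.comp ((IsLatticeHom.lpEval i).comp (closedLatticeSpan.isLatticeHom_subtypeL _)))
  · ext x; exact congrArg Subtype.val (DFunLike.congr_fun hψ₁ x)
  · ext x; exact congrArg Subtype.val (DFunLike.congr_fun hψ₂ x)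
  · exact ContinuousLinearMap.opNorm_le_bound _ hc.le fun p =>
      (ψ.le_of_opNorm_le hψ_norm _).trans
        (mul_le_mul_of_nonneg_left (lp.norm_apply_le_norm ENNReal.top_ne_zero _ i) hc.le)

theorem exists_desc (hR₁ : IsLatticeHom R₁) (hR₂ : IsLatticeHom R₂)
    (hR : R₁.comp T₁ = R₂.comp T₂) :
    ∃ γ : Pushout T₁ T₂ →L[ℝ] Y, IsLatticeHom γ ∧ γ.comp (inl T₁ T₂) = R₁ ∧
      γ.comp (inr T₁ T₂) = R₂ ∧ ‖γ‖ ≤ max ‖R₁‖ ‖R₂‖ := by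
  rcases ((norm_nonneg R₁).trans (le_max_left _ ‖R₂‖)).eq_or_lt with h | h
  · obtain rfl : R₁ = 0 := norm_le_zero_iff.1 ((le_max_left _ _).trans h.ge)
    obtain rfl : R₂ = 0 := norm_le_zero_iff.1 ((le_max_right _ _).trans h.ge)
    exact ⟨0, fun _ _ => (sup_idem _).symm, rfl, rfl, by rw [← h, ContinuousLinearMap.opNorm_zero]⟩
  · exact exists_desc_of_norm_le hR₁ hR₂ hR h (le_max_left _ _) (le_max_right _ _)

end Pushout

end Pushout

theorem exists_pushout_banach_lattice_general {X₀ X₁ X₂ : Type}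
    [NormedAddCommGroup X₀] [NormedSpace ℝ X₀]
    [NormedAddCommGroup X₁] [Lattice X₁] [HasSolidNorm X₁] [IsOrderedAddMonoid X₁] [NormedSpace ℝ X₁]
    [NormedAddCommGroup X₂] [Lattice X₂] [HasSolidNorm X₂] [IsOrderedAddMonoid X₂] [NormedSpace ℝ X₂]
    (T₁ : X₀ →L[ℝ] X₁) (T₂ : X₀ →L[ℝ] X₂) :
    ∃ (PO : Type) (_ : NormedAddCommGroup PO) (_ : Lattice PO) (_ : HasSolidNorm PO)
      (_ : IsOrderedAddMonoid PO) (_ : NormedSpace ℝ PO)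
      (_ : CompleteSpace PO) (S₁ : X₁ →L[ℝ] PO) (S₂ : X₂ →L[ℝ] PO),
      IsLatticeHom S₁ ∧ IsLatticeHom S₂ ∧ ‖S₁‖ ≤ 1 ∧ ‖S₂‖ ≤ 1 ∧
      S₁.comp T₁ = S₂.comp T₂ ∧
      ∀ (Y : Type) (_ : NormedAddCommGroup Y) (_ : Lattice Y) (_ : HasSolidNorm Y)
      (_ : IsOrderedAddMonoid Y) (_ : NormedSpace ℝ Y)
        (_ : CompleteSpace Y) (R₁ : X₁ →L[ℝ] Y) (R₂ : X₂ →L[ℝ] Y),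
        IsLatticeHom R₁ → IsLatticeHom R₂ → R₁.comp T₁ = R₂.comp T₂ →
        (∃ γ : PO →L[ℝ] Y, IsLatticeHom γ ∧ γ.comp S₁ = R₁ ∧ γ.comp S₂ = R₂ ∧
            ‖γ‖ ≤ max ‖R₁‖ ‖R₂‖) ∧
          (∀ γ γ' : PO →L[ℝ] Y,
            IsLatticeHom γ → γ.comp S₁ = R₁ → γ.comp S₂ = R₂ →
            IsLatticeHom γ' → γ'.comp S₁ = R₁ → γ'.comp S₂ = R₂ → γ = γ') := by
  refine ⟨Pushout T₁ T₂, inferInstance, inferInstance, inferInstance, inferInstance, inferInstance,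
    inferInstance, Pushout.inl T₁ T₂, Pushout.inr T₁ T₂, Pushout.isLatticeHom_inl T₁ T₂,
    Pushout.isLatticeHom_inr T₁ T₂, Pushout.norm_inl_le T₁ T₂, Pushout.norm_inr_le T₁ T₂,
    Pushout.inl_comp_eq T₁ T₂, ?_⟩
  intro Y _ _ _ _ _ _ R₁ R₂ hR₁ hR₂ hR
  exact ⟨Pushout.exists_desc hR₁ hR₂ hR, fun γ γ' hγ h₁ h₂ hγ' h₁' h₂' =>
    Pushout.hom_ext hγ hγ' (h₁.trans h₁'.symm) (h₂.trans h₂'.symm)⟩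

/-- Existence of push-outs in the category of Banach lattices: given lattice
homomorphisms `T₁ : X₀ → X₁` and `T₂ : X₀ → X₂`, there is a Banach lattice
`PO` and lattice homomorphisms `S₁ : X₁ → PO`, `S₂ : X₂ → PO` of norm at most
`1` with `S₁T₁ = S₂T₂`, such that every pair of lattice homomorphisms
`R᾿ᵢ : Xᵢ → Y` with `R₁T₁ = R₂T₂` factors through a unique lattice homomorphism
`γ : PO → Y` with `γSᵢ = Rᵢ` and `‖γ‖ ≤ max {‖R₁‖, ‖R₂‖}`. -/
theorem exists_pushout_banach_lattice {X₀ X₁ X₂ : Type}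
    [NormedAddCommGroup X₀] [Lattice X₀] [HasSolidNorm X₀] [IsOrderedAddMonoid X₀] [NormedSpace ℝ X₀] [CompleteSpace X₀]
    [NormedAddCommGroup X₁] [Lattice X₁] [HasSolidNorm X₁] [IsOrderedAddMonoid X₁] [NormedSpace ℝ X₁] [CompleteSpace X₁]
    [NormedAddCommGroup X₂] [Lattice X₂] [HasSolidNorm X₂] [IsOrderedAddMonoid X₂] [NormedSpace ℝ X₂] [CompleteSpace X₂]
    (T₁ : X₀ →L[ℝ] X₁) (T₂ : X₀ →L[ℝ] X₂)
    (hT₁ : IsLatticeHom T₁) (hT₂ : IsLatticeHom T₂) :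
    ∃ (PO : Type) (_ : NormedAddCommGroup PO) (_ : Lattice PO) (_ : HasSolidNorm PO)
      (_ : IsOrderedAddMonoid PO) (_ : NormedSpace ℝ PO)
      (_ : CompleteSpace PO) (S₁ : X₁ →L[ℝ] PO) (S₂ : X₂ →L[ℝ] PO),
      IsLatticeHom S₁ ∧ IsLatticeHom S₂ ∧ ‖S₁‖ ≤ 1 ∧ ‖S₂‖ ≤ 1 ∧
      S₁.comp T₁ = S₂.comp T₂ ∧
      ∀ (Y : Type) (_ : NormedAddCommGroup Y) (_ : Lattice Y) (_ : HasSolidNorm Y)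
      (_ : IsOrderedAddMonoid Y) (_ : NormedSpace ℝ Y)
        (_ : CompleteSpace Y) (R₁ : X₁ →L[ℝ] Y) (R₂ : X₂ →L[ℝ] Y),
        IsLatticeHom R₁ → IsLatticeHom R₂ → R₁.comp T₁ = R₂.comp T₂ →
        (∃ γ : PO →L[ℝ] Y, IsLatticeHom γ ∧ γ.comp S₁ = R₁ ∧ γ.comp S₂ = R₂ ∧
            ‖γ‖ ≤ max ‖R₁‖ ‖R₂‖) ∧
          (∀ γ γ' : PO →L[ℝ] Y,
            IsLatticeHom γ → γ.comp S₁ = R₁ → γ.comp S₂ = R₂ →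
            IsLatticeHom γ' → γ'.comp S₁ = R₁ → γ'.comp S₂ = R₂ → γ = γ') :=
  exists_pushout_banach_lattice_general T₁ T₂
end

section
/- Let (x_n) be an increasing sequence in a Banach lattice X with upper bound x_∞ ∈ X. Then x_∞ is the supremum of {x_n} in every Banach lattice Y containing X as a sublattice if and only if x_n converges to x_∞ in the weak topology of X. -/
/-!
Weak convergence of an increasing sequence bounded above by `xinf` is the same as norm
convergence: by Mazur's lemma `xinf` is a norm limit of convex combinations of the `x n`, each of
which lies below some `x N`, and solidity of the norm then controls `‖xinf - x n‖` for `n ≥ N`.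
Norm convergence gives `xinf = sup x n` in every superlattice because the positive cone is closed.
Conversely, embed `X` by constant sequences into `ℓ^∞(X) / c₀(X)`, whose quotient norm is
`limsup ‖u n‖`. There the class of the sequence `x` itself is an upper bound of the constants
`x m`, so if the image of `xinf` is the least upper bound, then `(xinf - x n)⁺ = xinf - x n`
tends to zero.
-/

open Filter Topology Set BoundedContinuousFunction

abbrev Function.Surjective.lattice {α β : Type*} [Lattice α] [Max β] [Min β] (f : α → β)
    (hf : Function.Surjective f) (map_sup : ∀ a b, f (a ⊔ b) = f a ⊔ f b)
    (map_inf : ∀ a b, f (a ⊓ b) = f a ⊓ f b) : Lattice β :=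
  Lattice.mk'
    (hf.forall₂.2 fun a b => by simp only [← map_sup, sup_comm])
    (hf.forall₃.2 fun a b c => by simp only [← map_sup, sup_assoc])
    (hf.forall₂.2 fun a b => by simp only [← map_inf, inf_comm])
    (hf.forall₃.2 fun a b c => by simp only [← map_inf, inf_assoc])
    (hf.forall₂.2 fun a b => by simp only [← map_sup, ← map_inf, sup_inf_self])
    (hf.forall₂.2 fun a b => by simp only [← map_sup, ← map_inf, inf_sup_self])

lemma monotone_of_map_sup {α β : Type*} [Lattice α] [Lattice β] {f : α → β}
    (hf : ∀ a b, f (a ⊔ b) = f a ⊔ f b) : Monotone f := fun a b hab => by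
  rw [← sup_eq_right.2 hab, hf]
  exact le_sup_left

section PosSMul
variable {X : Type*} [AddCommGroup X] [Lattice X] [IsOrderedAddMonoid X] [Module ℝ X]

lemma inv_two_pow_smul_nonneg {a : X} (ha : 0 ≤ a) (k : ℕ) : 0 ≤ ((2 : ℝ)⁻¹ ^ k) • a := by
  induction k with
  | zero => simpa using ha
  | succ k ih =>
    refine nsmul_two_semiclosed ?_
    rwa [← Nat.cast_smul_eq_nsmul ℝ, smul_smul, pow_succ, mul_comm, mul_assoc, Nat.cast_two,
      inv_mul_cancel₀ two_ne_zero, mul_one]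

variable [TopologicalSpace X] [ContinuousSMul ℝ X] [OrderClosedTopology X]

/-- Approximate `c` by dyadic rationals, using `0 ≤ 2 • b → 0 ≤ b` in lattice-ordered groups. -/
lemma smul_nonneg_of_orderClosedTopology {c : ℝ} (hc : 0 ≤ c) {a : X} (ha : 0 ≤ a) :
    0 ≤ c • a := by
  have hdyadic : ∀ k : ℕ, 0 ≤ ((⌊c * 2 ^ k⌋₊ : ℝ) / 2 ^ k) • a := fun k => by
    rw [div_eq_mul_inv, ← inv_pow, mul_smul, Nat.cast_smul_eq_nsmul]
    exact nsmul_nonneg (inv_two_pow_smul_nonneg ha k) _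
  have hlim : Tendsto (fun k : ℕ => (⌊c * 2 ^ k⌋₊ : ℝ) / 2 ^ k) atTop (𝓝 c) :=
    (tendsto_nat_floor_mul_div_atTop hc).comp (tendsto_pow_atTop_atTop_of_one_lt one_lt_two)
  exact ge_of_tendsto' (hlim.smul_const a) hdyadic

lemma PosSMulMono.of_orderClosedTopology : PosSMulMono ℝ X :=
  .of_smul_nonneg fun _ hc _ ha => smul_nonneg_of_orderClosedTopology hc ha

end PosSMul

section SolidNorm
variable {X : Type*} [NormedAddCommGroup X] [Lattice X] [IsOrderedAddMonoid X] [HasSolidNorm X]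

lemma norm_le_norm_of_nonneg_of_le' {a b : X} (ha : 0 ≤ a) (hab : a ≤ b) : ‖a‖ ≤ ‖b‖ :=
  norm_le_norm_of_abs_le_abs <| by rwa [abs_of_nonneg ha, abs_of_nonneg (ha.trans hab)]

lemma norm_le_norm_add_norm_sub_of_le_of_le {a b c : X} (hab : a ≤ b) (hbc : b ≤ c) :
    ‖b‖ ≤ ‖a‖ + ‖c - a‖ :=
  (norm_le_norm_add_norm_sub' b a).trans <| add_le_add le_rfl
    (norm_le_norm_of_nonneg_of_le' (sub_nonneg.2 hab) (sub_le_sub_right hbc a))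

lemma norm_le_norm_add_norm_posPart_abs_sub_abs (a b : X) : ‖a‖ ≤ ‖b‖ + ‖(|a| - |b|)⁺‖ := by
  have h : |a| ≤ |b| + (|a| - |b|)⁺ := sub_le_iff_le_add'.1 (le_posPart _)
  calc ‖a‖ = ‖|a|‖ := (norm_abs_eq_norm a).symm
    _ ≤ ‖|b| + (|a| - |b|)⁺‖ := norm_le_norm_of_abs_le_abs <| by
      rwa [abs_abs, abs_of_nonneg (add_nonneg (abs_nonneg b) (posPart_nonneg _))]
    _ ≤ ‖b‖ + ‖(|a| - |b|)⁺‖ := by grw [norm_add_le, norm_abs_eq_norm]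

end SolidNorm

section WeakToNorm

lemma Monotone.exists_le_of_mem_convexHull_range {ι X : Type*} [SemilatticeSup ι]
    [AddCommGroup X] [PartialOrder X] [IsOrderedAddMonoid X] [Module ℝ X] [PosSMulMono ℝ X]
    {x : ι → X} (hx : Monotone x) {y : X} (hy : y ∈ convexHull ℝ (range x)) : ∃ i, y ≤ x i := by
  have hconv : Convex ℝ {y : X | ∃ i, y ≤ x i} := by
    rintro y ⟨i, hi⟩ z ⟨j, hj⟩ a b ha hb hab
    refine ⟨i ⊔ j, ?_⟩
    calc a • y + b • z ≤ a • x (i ⊔ j) + b • x (i ⊔ j) := by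
          gcongr
          exacts [hi.trans (hx le_sup_left), hj.trans (hx le_sup_right)]
      _ = x (i ⊔ j) := by rw [← add_smul, hab, one_smul]
  exact convexHull_min (t := {y : X | ∃ i, y ≤ x i}) (range_subset_iff.2 fun i => ⟨i, le_rfl⟩) hconv hy

lemma mem_closure_convexHull_of_forall_tendsto {ι E : Type*} [NormedAddCommGroup E]
    [NormedSpace ℝ E] {l : Filter ι} [l.NeBot] {x : ι → E} {y : E}
    (h : ∀ f : E →L[ℝ] ℝ, Tendsto (fun i => f (x i)) l (𝓝 (f y))) :
    y ∈ closure (convexHull ℝ (range x)) := by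
  have hweak : Tendsto (fun i => toWeakSpace ℝ E (x i)) l (𝓝 (toWeakSpace ℝ E y)) :=
    (WeakBilin.tendsto_iff_forall_eval_tendsto _
      (separatingDual_iff_injective.1 inferInstance)).2 h
  have hmem := mem_closure_of_tendsto hweak (Eventually.of_forall fun i =>
    mem_image_of_mem _ (subset_convexHull ℝ _ (mem_range_self i)))
  rw [← (convex_convexHull ℝ _).toWeakSpace_closure ℝ] at hmem
  simpa using hmem

lemma Monotone.tendsto_of_mem_closure_convexHull {ι X : Type*} [SemilatticeSup ι] [Nonempty ι]
    [NormedAddCommGroup X] [Lattice X] [IsOrderedAddMonoid X] [HasSolidNorm X] [NormedSpace ℝ X]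
    {x : ι → X} (hx : Monotone x) {xinf : X} (hub : ∀ i, x i ≤ xinf)
    (hmem : xinf ∈ closure (convexHull ℝ (range x))) : Tendsto x atTop (𝓝 xinf) := by
  have := PosSMulMono.of_orderClosedTopology (X := X)
  rw [Metric.tendsto_atTop]
  intro ε hε
  obtain ⟨y, hy, hdist⟩ := Metric.mem_closure_iff.1 hmem ε hε
  obtain ⟨N, hN⟩ := hx.exists_le_of_mem_convexHull_range hy
  refine ⟨N, fun n hn => ?_⟩
  rw [dist_eq_norm] at hdist
  rw [dist_comm, dist_eq_norm]
  exact (norm_le_norm_of_nonneg_of_le' (sub_nonneg.2 (hub n))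
    (sub_le_sub_left (hN.trans (hx hn)) xinf)).trans_lt hdist

end WeakToNorm

section NullSeq
variable (X : Type*) [NormedAddCommGroup X] [NormedSpace ℝ X]

def nullSeq : Submodule ℝ (ℕ →ᵇ X) where
  carrier := {g | Tendsto g atTop (𝓝 0)}
  add_mem' hf hg := add_zero (0 : X) ▸ hf.add hg
  zero_mem' := tendsto_const_nhds
  smul_mem' c _ hg := by simpa using hg.const_smul c

variable {X}

lemma mem_nullSeq {g : ℕ →ᵇ X} : g ∈ nullSeq X ↔ Tendsto g atTop (𝓝 0) := Iff.rfl

lemma nullSeq_eq_range_toBCF :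
    (nullSeq X : Set (ℕ →ᵇ X)) = range ZeroAtInftyContinuousMap.toBCF := by
  ext g
  refine ⟨fun hg => ⟨⟨g.toContinuousMap, by rwa [cocompact_eq_atTop]⟩, rfl⟩, ?_⟩
  rintro ⟨f, rfl⟩
  rw [SetLike.mem_coe, mem_nullSeq, ← cocompact_eq_atTop]
  exact f.zero_at_infty'

instance : IsClosed (nullSeq X : Set (ℕ →ᵇ X)) := by
  rw [nullSeq_eq_range_toBCF]
  exact ZeroAtInftyContinuousMap.isClosed_range_toBCF

local notation "mk" => Submodule.Quotient.mk (p := nullSeq X)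

lemma norm_mk_le_of_eventually_norm_le {u : ℕ →ᵇ X} {r : ℝ} (h : ∀ᶠ n in atTop, ‖u n‖ ≤ r) :
    ‖mk u‖ ≤ r := by
  obtain ⟨N, hN⟩ := eventually_atTop.1 h
  have hr : 0 ≤ r := (norm_nonneg _).trans (hN N le_rfl)
  let w : ℕ →ᵇ X := ofNormedAddCommGroupDiscrete (fun n => if n < N then 0 else u n) ‖u‖
    fun n => by split_ifs <;> simp [norm_coe_le_norm]
  have hw : u - w ∈ nullSeq X := tendsto_const_nhds.congr' <|
    (eventually_ge_atTop N).mono fun n hn => by simp [w, not_lt.2 hn]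
  calc ‖mk u‖ = ‖mk w‖ := by rw [(Submodule.Quotient.eq _).2 hw]
    _ ≤ ‖w‖ := Submodule.Quotient.norm_mk_le _ _
    _ ≤ r := (norm_le hr).2 fun n => by
      by_cases hn : n < N
      · simpa [w, hn] using hr
      · simpa [w, hn] using hN n (not_lt.1 hn)

lemma eventually_norm_lt_norm_mk_add (u : ℕ →ᵇ X) {ε : ℝ} (hε : 0 < ε) :
    ∀ᶠ n in atTop, ‖u n‖ < ‖mk u‖ + ε := by
  obtain ⟨w, hwu, hw⟩ := Submodule.Quotient.norm_mk_lt (mk u) (half_pos hε)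
  have hsub : Tendsto (fun n => ‖u n - w n‖) atTop (𝓝 0) := by
    simpa using (mem_nullSeq.1 ((Submodule.Quotient.eq _).1 hwu.symm)).norm
  filter_upwards [hsub.eventually (gt_mem_nhds (half_pos hε))] with n hn
  calc ‖u n‖ ≤ ‖w n‖ + ‖u n - w n‖ := norm_le_norm_add_norm_sub' _ _
    _ < ‖mk u‖ + ε / 2 + ε / 2 :=
      add_lt_add_of_le_of_lt ((norm_coe_le_norm w n).trans hw.le) hn
    _ = ‖mk u‖ + ε := by ring

end NullSeq

section QuotientLattice
variable {X : Type*} [NormedAddCommGroup X] [Lattice X] [IsOrderedAddMonoid X] [HasSolidNorm X]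
  [NormedSpace ℝ X]

local notation "mk" => Submodule.Quotient.mk (p := nullSeq X)

lemma sup_sub_sup_mem_nullSeq {a b c d : ℕ →ᵇ X} (hac : a - c ∈ nullSeq X)
    (hbd : b - d ∈ nullSeq X) : a ⊔ b - c ⊔ d ∈ nullSeq X :=
  squeeze_zero_norm (fun n => norm_sup_sub_sup_le_add_norm (a n) (b n) (c n) (d n))
    (by simpa using (mem_nullSeq.1 hac).norm.add (mem_nullSeq.1 hbd).norm)

lemma inf_sub_inf_mem_nullSeq {a b c d : ℕ →ᵇ X} (hac : a - c ∈ nullSeq X)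
    (hbd : b - d ∈ nullSeq X) : a ⊓ b - c ⊓ d ∈ nullSeq X :=
  squeeze_zero_norm (fun n => norm_inf_sub_inf_le_add_norm (a n) (b n) (c n) (d n))
    (by simpa using (mem_nullSeq.1 hac).norm.add (mem_nullSeq.1 hbd).norm)

noncomputable instance : Max ((ℕ →ᵇ X) ⧸ nullSeq X) :=
  ⟨Quotient.map₂ (· ⊔ ·) fun _ _ hac _ _ hbd => (Submodule.quotientRel_def _).2 <|
    sup_sub_sup_mem_nullSeq ((Submodule.quotientRel_def _).1 hac)
      ((Submodule.quotientRel_def _).1 hbd)⟩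

noncomputable instance : Min ((ℕ →ᵇ X) ⧸ nullSeq X) :=
  ⟨Quotient.map₂ (· ⊓ ·) fun _ _ hac _ _ hbd => (Submodule.quotientRel_def _).2 <|
    inf_sub_inf_mem_nullSeq ((Submodule.quotientRel_def _).1 hac)
      ((Submodule.quotientRel_def _).1 hbd)⟩

lemma mk_sup (u v : ℕ →ᵇ X) : mk (u ⊔ v) = mk u ⊔ mk v := rfl

lemma mk_inf (u v : ℕ →ᵇ X) : mk (u ⊓ v) = mk u ⊓ mk v := rfl

noncomputable instance : Lattice ((ℕ →ᵇ X) ⧸ nullSeq X) :=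
  (Submodule.Quotient.mk_surjective _).lattice _ mk_sup mk_inf

lemma mk_le_mk_iff {u v : ℕ →ᵇ X} : mk u ≤ mk v ↔ (u - v)⁺ ∈ nullSeq X := by
  rw [← sup_eq_right, ← mk_sup, Submodule.Quotient.eq, sup_sub, sub_self, posPart_def]

lemma mk_abs (u : ℕ →ᵇ X) : mk |u| = |mk u| := mk_sup u (-u)

instance : IsOrderedAddMonoid ((ℕ →ᵇ X) ⧸ nullSeq X) where
  add_le_add_left := (Submodule.Quotient.mk_surjective _).forall₂.2 fun u v huv =>
    (Submodule.Quotient.mk_surjective _).forall.2 fun w => by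
      rw [← Submodule.Quotient.mk_add, ← Submodule.Quotient.mk_add, mk_le_mk_iff,
        add_sub_add_right_eq_sub]
      exact mk_le_mk_iff.1 huv

instance : HasSolidNorm ((ℕ →ᵇ X) ⧸ nullSeq X) where
  solid := (Submodule.Quotient.mk_surjective _).forall₂.2 fun u v huv => by
    rw [← mk_abs, ← mk_abs, mk_le_mk_iff] at huv
    refine le_of_forall_pos_le_add fun ε hε => norm_mk_le_of_eventually_norm_le ?_
    have hsmall : Tendsto (fun n => ‖((|u| - |v|)⁺ : ℕ →ᵇ X) n‖) atTop (𝓝 0) := by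
      simpa using (mem_nullSeq.1 huv).norm
    filter_upwards [eventually_norm_lt_norm_mk_add v (half_pos hε),
      hsmall.eventually (gt_mem_nhds (half_pos hε))] with n hv hsmall
    calc ‖u n‖ ≤ ‖v n‖ + ‖(|u n| - |v n|)⁺‖ := norm_le_norm_add_norm_posPart_abs_sub_abs _ _
      _ ≤ ‖mk v‖ + ε / 2 + ε / 2 := (add_lt_add hv (by simpa using hsmall)).le
      _ = ‖mk v‖ + ε := by ring

noncomputable def constEmbedding : X →ₗᵢ[ℝ] (ℕ →ᵇ X) ⧸ nullSeq X where
  toFun a := mk (const ℕ a)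
  map_add' _ _ := rfl
  map_smul' _ _ := rfl
  norm_map' a := show ‖mk (const ℕ a)‖ = ‖a‖ from le_antisymm
    (norm_mk_le_of_eventually_norm_le (Eventually.of_forall fun n => by simp))
    (le_of_forall_pos_le_add fun ε hε => by
      obtain ⟨n, hn⟩ := (eventually_norm_lt_norm_mk_add (const ℕ a) hε).exists
      simpa using hn.le)

lemma constEmbedding_sup (a b : X) :
    constEmbedding (a ⊔ b) = constEmbedding a ⊔ constEmbedding b := rfl

lemma Monotone.tendsto_of_isLUB_constEmbedding {x : ℕ → X} (hx : Monotone x) {xinf : X}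
    (hub : ∀ n, x n ≤ xinf)
    (hlub : IsLUB (range fun n => constEmbedding (x n)) (constEmbedding xinf)) :
    Tendsto x atTop (𝓝 xinf) := by
  let g : ℕ →ᵇ X := ofNormedAddCommGroupDiscrete x (‖x 0‖ + ‖xinf - x 0‖) fun n =>
    norm_le_norm_add_norm_sub_of_le_of_le (hx (Nat.zero_le n)) (hub n)
  have hupper : ∀ m, constEmbedding (x m) ≤ mk g := fun m =>
    mk_le_mk_iff.2 <| tendsto_const_nhds.congr' <| (eventually_ge_atTop m).mono fun n hn => by
      simp [g, posPart_eq_zero.2 (sub_nonpos.2 (hx hn))]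
  have hgap : Tendsto (fun n => (xinf - x n)⁺) atTop (𝓝 0) :=
    mem_nullSeq.1 (mk_le_mk_iff.1 (hlub.2 (forall_mem_range.2 hupper)))
  simp only [posPart_eq_self.2 (sub_nonneg.2 (hub _))] at hgap
  simpa using (tendsto_const_nhds : Tendsto (fun _ => xinf) atTop (𝓝 xinf)).sub hgap

end QuotientLattice

/-- Let `(x n)` be an increasing sequence in a Banach lattice `X` with an upper
bound `xinf ∈ X`.  Then `xinf` is the supremum of `{x n}` in every Banach lattice
`Y` containing `X` as a (closed) sublattice — i.e. under every lattice
isometric embedding `j : X → Y` the element `j xinf` is the least upper bound of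
the `j (x n)` — if and only if `x n → xinf` in the weak topology of `X`. -/
theorem sup_in_every_superlattice_iff_weak_limit {X : Type}
    [NormedAddCommGroup X] [Lattice X] [IsOrderedAddMonoid X] [HasSolidNorm X] [NormedSpace ℝ X] [CompleteSpace X]
    (x : ℕ → X) (hmono : Monotone x) (xinf : X) (hub : ∀ n, x n ≤ xinf) :
    (∀ (Y : Type) (_ : NormedAddCommGroup Y) (_ : Lattice Y)
        (_ : IsOrderedAddMonoid Y) (_ : HasSolidNorm Y) (_ : NormedSpace ℝ Y)
        (_ : CompleteSpace Y) (j : X →ₗᵢ[ℝ] Y),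
        (∀ a b : X, j (a ⊔ b) = j a ⊔ j b) →
        IsLUB (Set.range fun n => j (x n)) (j xinf)) ↔
      ∀ f : X →L[ℝ] ℝ, Tendsto (fun n => f (x n)) atTop (nhds (f xinf)) := by
  constructor
  · intro H f
    have hlub := H ((ℕ →ᵇ X) ⧸ nullSeq X) inferInstance inferInstance inferInstance inferInstance
      inferInstance inferInstance constEmbedding constEmbedding_sup
    exact (f.continuous.tendsto xinf).comp (hmono.tendsto_of_isLUB_constEmbedding hub hlub)
  · intro hweak Y _ _ _ _ _ _ j hj
    have hnorm := hmono.tendsto_of_mem_closure_convexHull hub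
      (mem_closure_convexHull_of_forall_tendsto hweak)
    exact isLUB_of_tendsto_atTop ((monotone_of_map_sup hj).comp hmono)
      ((j.continuous.tendsto xinf).comp hnorm)
end

section
/- Every separably 𝓑𝓛-injective Banach lattice Z has the countable interpolation property: for any sequences (x_n), (y_m) in Z with x_n ≤ y_m for all n, m, there exists z ∈ Z with x_n ≤ z ≤ y_m for all n, m. -/
/-!
Let `X` be the closed sublattice of `Z` generated by the `x n` and `y m`; it is separable. Embed `Z`
into `ℓ∞(Z)/c₀(Z)` as the classes of constant sequences, which is a lattice isometry. There the
class `ξ` of the partial suprema `x 0 ⊔ ⋯ ⊔ x k` lies above every `x n`, since the sequence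
eventually dominates `x n`, and below every `y m`. The closed sublattice `Y` generated by `ξ` and
the image of `X` is separable, so the inclusion `X → Z` extends to a lattice homomorphism
`T : Y → Z`, and `T ξ` interpolates because lattice homomorphisms are monotone.
-/

open Set Filter Topology TopologicalSpace LatticeOrderedAddCommGroup BoundedContinuousFunction
  Submodule

/-- A Banach lattice `Z` is separably `𝓑𝓛`-injective if for every separable
Banach lattice `Y`, every closed sublattice `X ⊆ Y` (given here by a lattice
isometric embedding `j : X → Y`) and every lattice homomorphism `T : X → Z`,
there is a lattice homomorphism `T̃ : Y → Z` with `T̃ ∘ j = T`. -/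
def SeparablyBLInjective (Z : Type)
    [NormedAddCommGroup Z] [Lattice Z] [IsOrderedAddMonoid Z] [HasSolidNorm Z] [NormedSpace ℝ Z] [CompleteSpace Z] : Prop :=
  ∀ (X Y : Type)
    (_ : NormedAddCommGroup X) (_ : Lattice X) (_ : IsOrderedAddMonoid X)
    (_ : HasSolidNorm X) (_ : NormedSpace ℝ X) (_ : CompleteSpace X)
    (_ : NormedAddCommGroup Y) (_ : Lattice Y) (_ : IsOrderedAddMonoid Y)
    (_ : HasSolidNorm Y) (_ : NormedSpace ℝ Y) (_ : CompleteSpace Y)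
    (_ : TopologicalSpace.SeparableSpace Y)
    (j : X →ₗᵢ[ℝ] Y) (T : X →L[ℝ] Z),
    (∀ a b : X, j (a ⊔ b) = j a ⊔ j b) → (∀ a b : X, T (a ⊔ b) = T a ⊔ T b) →
    ∃ T' : Y →L[ℝ] Z, (∀ a b : Y, T' (a ⊔ b) = T' a ⊔ T' b) ∧ ∀ x, T' (j x) = T x

lemma abs_inf_sup_neg_le {α : Type*} [Lattice α] [AddCommGroup α] [IsOrderedAddMonoid α]
    (a : α) {b : α} (hb : 0 ≤ b) : |a ⊓ b ⊔ -b| ≤ b :=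
  abs_le'.2 ⟨sup_le inf_le_right (neg_le_self hb), neg_le.1 le_sup_right⟩

lemma norm_le_add_of_le_of_le {α : Type*} [NormedAddCommGroup α] [Lattice α]
    [IsOrderedAddMonoid α] [HasSolidNorm α] {a b p : α} (hap : a ≤ p) (hpb : p ≤ b) :
    ‖p‖ ≤ ‖a‖ + ‖b‖ :=
  calc ‖p‖ ≤ ‖|a| ⊔ |b|‖ := by
        refine HasSolidNorm.solid ?_
        rw [abs_of_nonneg (le_sup_of_le_left (abs_nonneg a))]
        exact abs_le'.2 ⟨hpb.trans ((le_abs_self b).trans le_sup_right),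
          (neg_le_neg hap).trans ((neg_le_abs a).trans le_sup_left)⟩
    _ ≤ ‖|a|‖ + ‖|b|‖ := norm_sup_le_add _ _
    _ = ‖a‖ + ‖b‖ := by rw [norm_abs_eq_norm, norm_abs_eq_norm]

section Solid

variable {R V : Type*} [Ring R] [AddCommGroup V] [Lattice V] [IsOrderedAddMonoid V] [Module R V]
  {S : Submodule R V}

lemma LatticeOrderedAddCommGroup.IsSolid.sup_sub_sup_mem (hS : IsSolid (S : Set V))
    {a a' b b' : V} (ha : a - a' ∈ S) (hb : b - b' ∈ S) : a ⊔ b - a' ⊔ b' ∈ S := by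
  rw [← sub_add_sub_cancel _ (a' ⊔ b)]
  refine add_mem (hS ha (abs_sup_sub_sup_le_abs _ _ _)) (hS hb ?_)
  simpa only [sup_comm a'] using abs_sup_sub_sup_le_abs b b' a'

lemma LatticeOrderedAddCommGroup.IsSolid.inf_sub_inf_mem (hS : IsSolid (S : Set V))
    {a a' b b' : V} (ha : a - a' ∈ S) (hb : b - b' ∈ S) : a ⊓ b - a' ⊓ b' ∈ S := by
  rw [← sub_add_sub_cancel _ (a' ⊓ b)]
  refine add_mem (hS ha (abs_inf_sub_inf_le_abs _ _ _)) (hS hb ?_)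
  simpa only [inf_comm a'] using abs_inf_sub_inf_le_abs b b' a'

end Solid

def LinearIsometry.codRestrict {R E F : Type*} [Ring R] [SeminormedAddCommGroup E]
    [SeminormedAddCommGroup F] [Module R E] [Module R F] (f : E →ₗᵢ[R] F) (p : Submodule R F)
    (h : ∀ x, f x ∈ p) : E →ₗᵢ[R] p :=
  ⟨f.toLinearMap.codRestrict p h, f.norm_map⟩

namespace Submodule

variable {V : Type*} [NormedAddCommGroup V] [Lattice V] [NormedSpace ℝ V] {s : Set V}

variable (s) in
def latticeSpanSeq : ℕ → Submodule ℝ V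
  | 0 => span ℝ s
  | n + 1 => span ℝ (image2 (· ⊔ ·) (latticeSpanSeq n) (latticeSpanSeq n))

variable (s) in
def closedLatticeSpan : Submodule ℝ V :=
  (⨆ n, latticeSpanSeq s n).topologicalClosure

lemma latticeSpanSeq_mono : Monotone (latticeSpanSeq s) :=
  monotone_nat_of_le_succ fun _ a ha => subset_span ⟨a, ha, a, ha, sup_idem a⟩

lemma supClosed_iSup_latticeSpanSeq :
    SupClosed ((⨆ n, latticeSpanSeq s n : Submodule ℝ V) : Set V) := by
  rw [coe_iSup_of_directed _ latticeSpanSeq_mono.directed_le]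
  rintro a ⟨_, ⟨m, rfl⟩, ha⟩ b ⟨_, ⟨n, rfl⟩, hb⟩
  exact mem_iUnion.2 ⟨max m n + 1, subset_span ⟨a, latticeSpanSeq_mono (le_max_left m n) ha,
    b, latticeSpanSeq_mono (le_max_right m n) hb, rfl⟩⟩

lemma subset_closedLatticeSpan : s ⊆ closedLatticeSpan s := fun _ ha =>
  le_topologicalClosure _ (mem_iSup_of_mem 0 (subset_span ha))

lemma isClosed_closedLatticeSpan : IsClosed (closedLatticeSpan s : Set V) :=
  isClosed_topologicalClosure _

section ContinuousSup

variable [ContinuousSup V]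

lemma supClosed_closedLatticeSpan : SupClosed (closedLatticeSpan s : Set V) :=
  fun _ ha _ hb => map_mem_closure₂ continuous_sup ha hb supClosed_iSup_latticeSpanSeq

lemma isSeparable_closedLatticeSpan (hs : IsSeparable s) :
    IsSeparable (closedLatticeSpan s : Set V) := by
  have hseq : ∀ n, IsSeparable (latticeSpanSeq s n : Set V) := by
    intro n
    induction n with
    | zero => exact hs.span
    | succ n ih =>
      refine IsSeparable.span ?_
      rw [← image_prod]
      exact (ih.prod ih).image continuous_sup
  rw [closedLatticeSpan, topologicalClosure_coe]
  refine IsSeparable.closure ?_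
  rw [coe_iSup_of_directed _ latticeSpanSeq_mono.directed_le]
  exact .iUnion hseq

instance : Max (closedLatticeSpan s) :=
  ⟨fun a b => ⟨a ⊔ b, supClosed_closedLatticeSpan a.2 b.2⟩⟩

variable [IsOrderedAddMonoid V]

lemma infClosed_closedLatticeSpan : InfClosed (closedLatticeSpan s : Set V) := by
  intro a ha b hb
  rw [← add_sub_cancel_right (a ⊓ b) (a ⊔ b), inf_add_sup]
  exact sub_mem (add_mem ha hb) (supClosed_closedLatticeSpan ha hb)

instance : Min (closedLatticeSpan s) :=
  ⟨fun a b => ⟨a ⊓ b, infClosed_closedLatticeSpan a.2 b.2⟩⟩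

instance : Lattice (closedLatticeSpan s) :=
  Subtype.coe_injective.lattice _ Iff.rfl Iff.rfl (fun _ _ => rfl) (fun _ _ => rfl)

instance [HasSolidNorm V] : HasSolidNorm (closedLatticeSpan s) :=
  ⟨fun _ _ h => HasSolidNorm.solid (α := V) h⟩

end ContinuousSup

instance [CompleteSpace V] : CompleteSpace (closedLatticeSpan s) :=
  isClosed_closedLatticeSpan.completeSpace_coe

end Submodule

namespace Submodule.Quotient

section Lattice

variable {R V : Type*} [Ring R] [AddCommGroup V] [Lattice V] [IsOrderedAddMonoid V] [Module R V]
  {S : Submodule R V} [hS : Fact (IsSolid (S : Set V))]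

instance : Max (V ⧸ S) where
  max := Quotient.map₂ (· ⊔ ·) fun _ _ ha _ _ hb => (quotientRel_def S).2 <|
    hS.out.sup_sub_sup_mem ((quotientRel_def S).1 ha) ((quotientRel_def S).1 hb)

instance : Min (V ⧸ S) where
  min := Quotient.map₂ (· ⊓ ·) fun _ _ ha _ _ hb => (quotientRel_def S).2 <|
    hS.out.inf_sub_inf_mem ((quotientRel_def S).1 ha) ((quotientRel_def S).1 hb)

@[simp] lemma mk_sup (a b : V) : (mk (a ⊔ b) : V ⧸ S) = mk a ⊔ mk b := rfl

@[simp] lemma mk_inf (a b : V) : (mk (a ⊓ b) : V ⧸ S) = mk a ⊓ mk b := rfl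

instance : Lattice (V ⧸ S) :=
  Lattice.mk'
    (fun a b => Quotient.inductionOn₂ a b fun a b => congrArg mk (sup_comm a b))
    (fun a b c => Quotient.inductionOn₃ a b c fun a b c => congrArg mk (sup_assoc a b c))
    (fun a b => Quotient.inductionOn₂ a b fun a b => congrArg mk (inf_comm a b))
    (fun a b c => Quotient.inductionOn₃ a b c fun a b c => congrArg mk (inf_assoc a b c))
    (fun a b => Quotient.inductionOn₂ a b fun a b =>
      congrArg mk (sup_inf_self (a := a) (b := b)))
    (fun a b => Quotient.inductionOn₂ a b fun a b =>
      congrArg mk (inf_sup_self (a := a) (b := b)))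

lemma mk_abs (a : V) : (mk |a| : V ⧸ S) = |mk a| := by
  rw [abs, abs, mk_sup, mk_neg]

instance : IsOrderedAddMonoid (V ⧸ S) where
  add_le_add_left a b hab c := by
    have hsup_add : ∀ x y z : V ⧸ S, (x ⊔ y) + z = (x + z) ⊔ (y + z) := fun x y z =>
      Quotient.inductionOn₃ x y z fun x y z => congrArg mk (sup_add x y z)
    rw [← sup_eq_right] at hab ⊢
    rw [← hsup_add, hab]

end Lattice

section Normed

variable {R V : Type*} [Ring R] [NormedAddCommGroup V] [Lattice V] [IsOrderedAddMonoid V]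
  [HasSolidNorm V] [Module R V] {S : Submodule R V} [Fact (IsSolid (S : Set V))]
  [IsClosed (S : Set V)]

instance : HasSolidNorm (V ⧸ S) where
  solid a b hab := by
    induction a using Submodule.Quotient.induction_on with | _ f => ?_
    refine QuotientAddGroup.le_norm_iff.2 fun g hg => ?_
    subst hg
    change |mk f| ≤ |mk g| at hab
    have hf_le : mk f ≤ |(mk g : V ⧸ S)| := (le_abs_self _).trans hab
    have hf_ge : -|(mk g : V ⧸ S)| ≤ mk f := _root_.neg_le.2 ((neg_le_abs _).trans hab)
    -- truncating `f` to `[-|g|, |g|]` does not change its class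
    calc ‖(mk f : V ⧸ S)‖ = ‖(mk (f ⊓ |g| ⊔ -|g|) : V ⧸ S)‖ := by
          rw [mk_sup, mk_inf, mk_neg, mk_abs, inf_eq_left.2 hf_le, sup_eq_left.2 hf_ge]
      _ ≤ ‖f ⊓ |g| ⊔ -|g|‖ := norm_mk_le S _
      _ ≤ ‖g‖ := HasSolidNorm.solid (abs_inf_sup_neg_le f (abs_nonneg g))

end Normed

end Submodule.Quotient

noncomputable section

namespace BoundedContinuousFunction

variable (Z : Type*) [NormedAddCommGroup Z] [NormedSpace ℝ Z]

def nullSeqs : Submodule ℝ (ℕ →ᵇ Z) where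
  carrier := {f | Tendsto f atTop (𝓝 0)}
  zero_mem' := tendsto_const_nhds
  add_mem' hf hg := by rw [mem_ofPred_eq, coe_add, ← add_zero (0 : Z)]; exact hf.add hg
  smul_mem' c _ hf := by simpa using hf.const_smul c

variable {Z}

lemma mem_nullSeqs {f : ℕ →ᵇ Z} : f ∈ nullSeqs Z ↔ Tendsto f atTop (𝓝 0) := Iff.rfl

instance : IsClosed (nullSeqs Z : Set (ℕ →ᵇ Z)) := by
  convert ZeroAtInftyContinuousMap.isClosed_range_toBCF (α := ℕ) (β := Z)
  ext f
  rw [SetLike.mem_coe, mem_nullSeqs, ← cocompact_eq_atTop]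
  exact ⟨fun hf => ⟨⟨f.toContinuousMap, hf⟩, rfl⟩,
    by rintro ⟨g, rfl⟩; exact g.zero_at_infty'⟩

lemma norm_mk_const (z : Z) :
    ‖(Submodule.Quotient.mk (const ℕ z) : (ℕ →ᵇ Z) ⧸ nullSeqs Z)‖ = ‖z‖ := by
  refine le_antisymm ((Submodule.Quotient.norm_mk_le _ _).trans (norm_const_le z))
    (QuotientAddGroup.le_norm_iff.2 fun f hf => ?_)
  have hfz : Tendsto f atTop (𝓝 z) := by
    have h := mem_nullSeqs.1 ((Submodule.Quotient.eq _).1 hf)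
    simpa using h.add_const z
  exact le_of_tendsto' hfz.norm fun k => norm_coe_le_norm f k

variable (Z) in
def constSeqEmbedding : Z →ₗᵢ[ℝ] (ℕ →ᵇ Z) ⧸ nullSeqs Z where
  toFun z := Submodule.Quotient.mk (const ℕ z)
  map_add' a b := by rw [← Submodule.Quotient.mk_add]; rfl
  map_smul' c a := by rw [RingHom.id_apply, ← Submodule.Quotient.mk_smul]; rfl
  norm_map' := norm_mk_const

variable [Lattice Z] [IsOrderedAddMonoid Z] [HasSolidNorm Z]

instance : Fact (IsSolid (nullSeqs Z : Set (ℕ →ᵇ Z))) :=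
  ⟨fun _ hf _ hgf => squeeze_zero_norm (fun k => norm_le_norm_of_abs_le_abs (hgf k))
    (tendsto_zero_iff_norm_tendsto_zero.1 hf)⟩

lemma constSeqEmbedding_sup (a b : Z) :
    constSeqEmbedding Z (a ⊔ b) = constSeqEmbedding Z a ⊔ constSeqEmbedding Z b := by
  refine (congrArg Submodule.Quotient.mk ?_).trans (Submodule.Quotient.mk_sup _ _)
  ext
  simp

lemma mk_le_mk_of_eventually_le {f g : ℕ →ᵇ Z} (h : ∀ᶠ k in atTop, f k ≤ g k) :
    (Submodule.Quotient.mk f : (ℕ →ᵇ Z) ⧸ nullSeqs Z) ≤ Submodule.Quotient.mk g := by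
  rw [← sup_eq_right, ← Submodule.Quotient.mk_sup, Submodule.Quotient.eq, mem_nullSeqs]
  refine tendsto_const_nhds.congr' (h.mono fun k hk => ?_)
  simp [sup_eq_right.2 hk]

lemma exists_between_constSeqEmbedding {x y : ℕ → Z} (hxy : ∀ n m, x n ≤ y m) :
    ∃ ξ, (∀ n, constSeqEmbedding Z (x n) ≤ ξ) ∧ ∀ m, ξ ≤ constSeqEmbedding Z (y m) := by
  let p : ℕ →ᵇ Z := ofNormedAddCommGroupDiscrete (partialSups x) (‖x 0‖ + ‖y 0‖) fun k =>
    norm_le_add_of_le_of_le (le_partialSups_of_le x k.zero_le)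
      (partialSups_le x k (y 0) fun i _ => hxy i 0)
  refine ⟨Submodule.Quotient.mk p, fun n => ?_, fun m => ?_⟩
  · exact mk_le_mk_of_eventually_le ((eventually_ge_atTop n).mono fun k hk =>
      le_partialSups_of_le x hk)
  · exact mk_le_mk_of_eventually_le (.of_forall fun k =>
      partialSups_le x k (y m) fun i _ => hxy i m)

end BoundedContinuousFunction

end

lemma SeparablyBLInjective.exists_extension {Z : Type} [NormedAddCommGroup Z] [Lattice Z]
    [IsOrderedAddMonoid Z] [HasSolidNorm Z] [NormedSpace ℝ Z] [CompleteSpace Z]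
    (hZ : SeparablyBLInjective Z) {X Y : Type}
    [NormedAddCommGroup X] [Lattice X] [IsOrderedAddMonoid X] [HasSolidNorm X] [NormedSpace ℝ X]
    [CompleteSpace X] [NormedAddCommGroup Y] [Lattice Y] [IsOrderedAddMonoid Y] [HasSolidNorm Y]
    [NormedSpace ℝ Y] [CompleteSpace Y] [SeparableSpace Y] (j : X →ₗᵢ[ℝ] Y) (T : X →L[ℝ] Z)
    (hj : ∀ a b : X, j (a ⊔ b) = j a ⊔ j b) (hT : ∀ a b : X, T (a ⊔ b) = T a ⊔ T b) :
    ∃ T' : Y →L[ℝ] Z, (∀ a b : Y, T' (a ⊔ b) = T' a ⊔ T' b) ∧ ∀ x, T' (j x) = T x :=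
  hZ X Y ‹_› ‹_› ‹_› ‹_› ‹_› ‹_› ‹_› ‹_› ‹_› ‹_› ‹_› ‹_› ‹_› j T hj hT

/-- Every separably 𝓑𝓛-injective Banach lattice has the countable interpolation
property: for sequences with  for all  there is an
interpolating element  with  for all . -/
theorem sep_injective_interpolation (Z : Type)
    [NormedAddCommGroup Z] [Lattice Z] [IsOrderedAddMonoid Z] [HasSolidNorm Z] [NormedSpace ℝ Z] [CompleteSpace Z]
    (hZ : SeparablyBLInjective Z) (x y : ℕ → Z)
    (hxy : ∀ n m, x n ≤ y m) :
    ∃ z : Z, ∀ n m, x n ≤ z ∧ z ≤ y m := by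
  obtain ⟨ξ, hxξ, hξy⟩ := exists_between_constSeqEmbedding hxy
  let X := closedLatticeSpan (range x ∪ range y)
  let Y := closedLatticeSpan (insert ξ (constSeqEmbedding Z '' X))
  have hX : IsSeparable (X : Set Z) := isSeparable_closedLatticeSpan
    ((countable_range x).union (countable_range y)).isSeparable
  have hY : IsSeparable (Y : Set ((ℕ →ᵇ Z) ⧸ nullSeqs Z)) := isSeparable_closedLatticeSpan <| by
    rw [insert_eq]
    exact (finite_singleton ξ).isSeparable.union (hX.image (constSeqEmbedding Z).continuous)
  have : SeparableSpace Y := hY.separableSpace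
  let j : X →ₗᵢ[ℝ] Y := ((constSeqEmbedding Z).comp X.subtypeₗᵢ).codRestrict Y fun a =>
    subset_closedLatticeSpan (mem_insert_of_mem _ (mem_image_of_mem _ a.2))
  obtain ⟨T, hT_sup, hT_j⟩ := hZ.exists_extension j X.subtypeL
    (fun a b => Subtype.ext (constSeqEmbedding_sup (a : Z) b)) (fun _ _ => rfl)
  have hT_mono : Monotone T := OrderHomClass.mono (⟨T, hT_sup⟩ : SupHom Y Z)
  let ζ : Y := ⟨ξ, subset_closedLatticeSpan (mem_insert ξ _)⟩
  refine ⟨T ζ, fun n m => ⟨?_, ?_⟩⟩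
  · have hx : x n ∈ X := subset_closedLatticeSpan (.inl ⟨n, rfl⟩)
    simpa [hT_j] using hT_mono (show j ⟨x n, hx⟩ ≤ ζ from hxξ n)
  · have hy : y m ∈ X := subset_closedLatticeSpan (.inr ⟨m, rfl⟩)
    simpa [hT_j] using hT_mono (show ζ ≤ j ⟨y m, hy⟩ from hξy m)
end

section
/- Let (Ω, Σ, ν) be a finite measure space, Z a Banach lattice, and T : L₁(ν) → Z a non-zero lattice homomorphism. Then there exists a measurable set B ⊆ Ω with ν(B) > 0 such that the restriction of T to L₁(B) (the ideal of functions supported on B) is a lattice isomorphism onto its range, i.e. bounded below. -/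
/-!
Choose a measurable `A₀` with `T χ_{A₀} ≠ 0`, a norm-one functional `φ` with
`φ (T χ_{A₀}) = ‖T χ_{A₀}‖`, and `δ > 0` so small that `δ ν(A₀) < ‖T χ_{A₀}‖`. A Hahn
decomposition of the signed measure `A ↦ φ (T χ_A) - δ ν(A)` yields a positive set `B`; it cannot
be null, because the measure is positive at `A₀` and nonpositive off `B`. Positivity on indicators
of subsets of `B` propagates by density to `δ ‖g‖ ≤ φ (T g)` for every `0 ≤ g ∈ L₁(B)`. For
`f ∈ L₁(B)`, since `T |f| = |T f|` and the norm of `Z` is solid,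
`δ ‖f‖ = δ ‖|f|‖ ≤ φ (T |f|) ≤ ‖T |f|‖ = ‖T f‖`.
-/

open MeasureTheory Set
open scoped ENNReal

namespace MeasureTheory

variable {Ω : Type*} [MeasurableSpace Ω]

section IndicatorVectorMeasure

variable (ν : Measure Ω) [IsFiniteMeasure ν]

open Classical in
/-- `A ↦ χ_A`, countably additive because `‖χ_A‖ = ν A`. -/
noncomputable def indicatorVectorMeasure : VectorMeasure Ω (Lp ℝ 1 ν) :=
  VectorMeasure.of_additive_of_le_measure (μ := ν)
    (fun s => if hs : MeasurableSet s then indicatorConstLp 1 hs (measure_ne_top ν s) 1 else 0)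
    (fun s => by
      split_ifs with hs
      · simpa using enorm_indicatorConstLp_le (p := 1) (hs := hs) (hμs := measure_ne_top ν s)
          (c := (1 : ℝ))
      · simp)
    (fun s t hs ht hst => by
      simp only [dif_pos hs, dif_pos ht, dif_pos (hs.union ht)]
      exact indicatorConstLp_disjoint_union hs ht _ _ hst 1)
    (fun _ hs => dif_neg hs)

theorem indicatorVectorMeasure_apply {s : Set Ω} (hs : MeasurableSet s) :
    indicatorVectorMeasure ν s = indicatorConstLp 1 hs (measure_ne_top ν s) 1 :=
  dif_pos hs

end IndicatorVectorMeasure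

variable {μ : Measure Ω} {p : ℝ≥0∞}

theorem indicatorConstLp_eq_smul_one {s : Set Ω} (hs : MeasurableSet s) (hμs : μ s ≠ ∞) (c : ℝ) :
    indicatorConstLp p hs hμs c = c • indicatorConstLp p hs hμs 1 := by
  ext1
  filter_upwards [indicatorConstLp_coeFn (hs := hs) (hμs := hμs) (c := c),
    Lp.coeFn_smul c (indicatorConstLp p hs hμs (1 : ℝ)),
    indicatorConstLp_coeFn (hs := hs) (hμs := hμs) (c := (1 : ℝ))] with x hc hsmul h1
  rw [hc, hsmul, Pi.smul_apply, h1]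
  by_cases hx : x ∈ s <;> simp [hx]

theorem indicatorConstLp_sup_zero [Fact (1 ≤ p)] {s : Set Ω} (hs : MeasurableSet s)
    (hμs : μ s ≠ ∞) (c : ℝ) :
    indicatorConstLp p hs hμs c ⊔ 0 = indicatorConstLp p hs hμs (c ⊔ 0) := by
  ext1
  filter_upwards [Lp.coeFn_sup (indicatorConstLp p hs hμs c) 0, Lp.coeFn_zero ℝ p μ,
    indicatorConstLp_coeFn (hs := hs) (hμs := hμs) (c := c),
    indicatorConstLp_coeFn (hs := hs) (hμs := hμs) (c := c ⊔ 0)] with x hsup h0 hc hc'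
  rw [hsup, Pi.sup_apply, h0, hc, hc']
  by_cases hx : x ∈ s <;> simp [hx]

theorem Lp.sup_zero_add_of_disjoint_support [Fact (1 ≤ p)] {f g : Ω → ℝ} (hf : MemLp f p μ)
    (hg : MemLp g p μ) (hfg : Disjoint (Function.support f) (Function.support g)) :
    (hf.toLp f + hg.toLp g) ⊔ 0 = (hf.toLp f ⊔ 0) + (hg.toLp g ⊔ 0) := by
  ext1
  filter_upwards [Lp.coeFn_add (hf.toLp f ⊔ 0) (hg.toLp g ⊔ 0),
    Lp.coeFn_sup (hf.toLp f + hg.toLp g) 0, Lp.coeFn_sup (hf.toLp f) 0,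
    Lp.coeFn_sup (hg.toLp g) 0, Lp.coeFn_add (hf.toLp f) (hg.toLp g),
    Lp.coeFn_zero ℝ p μ, hf.coeFn_toLp, hg.coeFn_toLp] with x h1 h2 h3 h4 h5 h0 hfx hgx
  simp only [h1, h2, h3, h4, h5, h0, hfx, hgx, Pi.add_apply, Pi.sup_apply, Pi.zero_apply]
  by_cases hx : f x = 0
  · simp [hx]
  · have hgx : g x = 0 :=
      Function.notMem_support.mp (disjoint_left.mp hfg (Function.mem_support.mpr hx))
    simp [hgx]

theorem Lp.map_nonneg_of_map_indicatorConstLp_nonneg [Fact (1 ≤ p)] (hp : p ≠ ∞)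
    (L : Lp ℝ p μ →L[ℝ] ℝ)
    (hL : ∀ s (hs : MeasurableSet s) (hμs : μ s ≠ ∞), 0 ≤ L (indicatorConstLp p hs hμs 1))
    {f : Lp ℝ p μ} (hf : 0 ≤ f) : 0 ≤ L f := by
  -- `Lp.induction` adds functions of disjoint supports, on which `g ↦ g ⊔ 0` is additive.
  suffices h : ∀ g : Lp ℝ p μ, 0 ≤ L (g ⊔ 0) by simpa [sup_eq_left.mpr hf] using h f
  refine Lp.induction hp _ (fun c s hs hμs => ?_) (fun F G hF hG hFG hF₀ hG₀ => ?_) ?_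
  · rw [Lp.simpleFunc.coe_indicatorConst, indicatorConstLp_sup_zero,
      indicatorConstLp_eq_smul_one, map_smul, smul_eq_mul]
    exact mul_nonneg le_sup_right (hL s hs hμs.ne)
  · rw [Lp.sup_zero_add_of_disjoint_support hF hG hFG, map_add]
    exact add_nonneg hF₀ hG₀
  · exact isClosed_le continuous_const (L.continuous.comp (continuous_id.sup continuous_const))

noncomputable def Lp.mulIndicator (p : ℝ≥0∞) [Fact (1 ≤ p)] {B : Set Ω} (hB : MeasurableSet B)
    (hμB : μ B ≠ ∞) :
    Lp ℝ p μ →L[ℝ] Lp ℝ p μ :=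
  (ContinuousLinearMap.mul ℝ ℝ).holderL μ ∞ p p (indicatorConstLp ∞ hB hμB 1)

theorem Lp.coeFn_mulIndicator [Fact (1 ≤ p)] {B : Set Ω} (hB : MeasurableSet B) (hμB : μ B ≠ ∞)
    (f : Lp ℝ p μ) : Lp.mulIndicator p hB hμB f =ᵐ[μ] B.indicator f := by
  filter_upwards [(ContinuousLinearMap.mul ℝ ℝ).coeFn_holder (r := p)
      (indicatorConstLp ∞ hB hμB 1) f,
    indicatorConstLp_coeFn (p := ∞) (hs := hB) (hμs := hμB) (c := (1 : ℝ))] with x h h1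
  rw [Lp.mulIndicator, ContinuousLinearMap.holderL_apply_apply, h, h1]
  by_cases hx : x ∈ B <;> simp [hx]

theorem Lp.mulIndicator_indicatorConstLp [Fact (1 ≤ p)] {B s : Set Ω} (hB : MeasurableSet B)
    (hμB : μ B ≠ ∞) (hs : MeasurableSet s) (hμs : μ s ≠ ∞) :
    Lp.mulIndicator p hB hμB (indicatorConstLp p hs hμs (1 : ℝ)) =
      indicatorConstLp p (hs.inter hB) (measure_ne_top_of_subset inter_subset_right hμB) 1 := by
  ext1
  filter_upwards [Lp.coeFn_mulIndicator hB hμB (indicatorConstLp p hs hμs (1 : ℝ)),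
    indicatorConstLp_coeFn (p := p) (hs := hs) (hμs := hμs) (c := (1 : ℝ)),
    indicatorConstLp_coeFn (p := p) (hs := hs.inter hB) (c := (1 : ℝ))
      (hμs := measure_ne_top_of_subset inter_subset_right hμB)] with x h hs' hsB
  rw [h, hsB]
  by_cases hxB : x ∈ B <;> by_cases hxs : x ∈ s <;> simp [hxB, hxs, hs']

theorem Lp.mulIndicator_eq_self [Fact (1 ≤ p)] {B : Set Ω} (hB : MeasurableSet B) (hμB : μ B ≠ ∞)
    {f : Lp ℝ p μ} (hf : ∀ᵐ x ∂μ, x ∉ B → f x = 0) : Lp.mulIndicator p hB hμB f = f := by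
  ext1
  filter_upwards [Lp.coeFn_mulIndicator hB hμB f, hf] with x h hfx
  rw [h]
  by_cases hx : x ∈ B <;> simp [hx, hfx]

theorem Lp.map_nonneg_of_map_indicatorConstLp_nonneg_of_subset [Fact (1 ≤ p)] (hp : p ≠ ∞)
    (L : Lp ℝ p μ →L[ℝ] ℝ) {B : Set Ω} (hB : MeasurableSet B) (hμB : μ B ≠ ∞)
    (hL : ∀ s (hs : MeasurableSet s) (hμs : μ s ≠ ∞), s ⊆ B →
      0 ≤ L (indicatorConstLp p hs hμs 1))
    {f : Lp ℝ p μ} (hf : 0 ≤ f) (hfB : ∀ᵐ x ∂μ, x ∉ B → f x = 0) : 0 ≤ L f := by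
  rw [← Lp.mulIndicator_eq_self hB hμB hfB]
  refine Lp.map_nonneg_of_map_indicatorConstLp_nonneg hp (L.comp (Lp.mulIndicator p hB hμB))
    (fun s hs hμs => ?_) hf
  rw [ContinuousLinearMap.comp_apply, Lp.mulIndicator_indicatorConstLp]
  exact hL _ _ _ inter_subset_right

theorem Lp.integral_eq_norm_of_nonneg {f : Lp ℝ 1 μ} (hf : 0 ≤ f) : ∫ x, f x ∂μ = ‖f‖ := by
  rw [L1.norm_eq_integral_norm]
  refine integral_congr_ae ?_
  filter_upwards [(Lp.coeFn_nonneg f).mpr hf] with x hx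
  rw [Real.norm_of_nonneg hx]

section L1

variable {ν : Measure Ω} [IsFiniteMeasure ν]

theorem indicatorVectorMeasure_of_measure_eq_zero {s : Set Ω} (hs : ν s = 0) :
    indicatorVectorMeasure ν s = 0 := by
  by_cases hms : MeasurableSet s
  · rw [indicatorVectorMeasure_apply ν hms, ← norm_eq_zero,
      norm_indicatorConstLp one_ne_zero ENNReal.one_ne_top]
    simp [measureReal_def, hs]
  · exact VectorMeasure.not_measurable _ hms

theorem exists_map_indicatorVectorMeasure_ne_zero {F : Type*} [NormedAddCommGroup F]
    [NormedSpace ℝ F] {T : Lp ℝ 1 ν →L[ℝ] F} (hT : T ≠ 0) :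
    ∃ A, MeasurableSet A ∧ T (indicatorVectorMeasure ν A) ≠ 0 := by
  contrapose! hT
  refine ContinuousLinearMap.ext fun f => ?_
  refine Lp.induction ENNReal.one_ne_top (fun f => T f = 0) (fun c s hs _ => ?_)
    (fun _ _ _ _ _ hF hG => by rw [map_add, hF, hG, add_zero])
    (isClosed_eq T.continuous continuous_const) f
  rw [Lp.simpleFunc.coe_indicatorConst, indicatorConstLp_eq_smul_one, map_smul,
    ← indicatorVectorMeasure_apply ν hs, hT s hs, smul_zero]

theorem mul_norm_le_of_mul_measureReal_le (ψ : Lp ℝ 1 ν →L[ℝ] ℝ) {δ : ℝ} {B : Set Ω}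
    (hB : MeasurableSet B)
    (hψ : ∀ A, MeasurableSet A → A ⊆ B → δ * ν.real A ≤ ψ (indicatorVectorMeasure ν A))
    {f : Lp ℝ 1 ν} (hf : 0 ≤ f) (hfB : ∀ᵐ x ∂ν, x ∉ B → f x = 0) : δ * ‖f‖ ≤ ψ f := by
  have key := Lp.map_nonneg_of_map_indicatorConstLp_nonneg_of_subset ENNReal.one_ne_top
    (ψ - δ • L1.integralCLM) hB (measure_ne_top ν B) (fun A hA _ hAB => ?_) hf hfB
  · rw [← Lp.integral_eq_norm_of_nonneg hf, ← L1.integral_eq_integral, L1.integral_eq]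
    simpa [sub_nonneg] using key
  · have := hψ A hA hAB
    rw [indicatorVectorMeasure_apply ν hA] at this
    simp only [sub_apply, smul_apply, ← L1.integral_eq,
      L1.integral_eq_integral, integral_indicatorConstLp, smul_eq_mul, mul_one, sub_nonneg]
    exact this

theorem exists_hahn_decomposition_sub_smul (ψ : Lp ℝ 1 ν →L[ℝ] ℝ) (δ : ℝ) :
    ∃ B, MeasurableSet B ∧
      (∀ A, MeasurableSet A → A ⊆ B → δ * ν.real A ≤ ψ (indicatorVectorMeasure ν A)) ∧
      (∀ A, MeasurableSet A → A ⊆ Bᶜ → ψ (indicatorVectorMeasure ν A) ≤ δ * ν.real A) := by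
  set s : SignedMeasure Ω :=
    (indicatorVectorMeasure ν).mapRange ψ.toLinearMap.toAddMonoidHom ψ.continuous -
      δ • ν.toSignedMeasure
  have hs : ∀ A, MeasurableSet A → s A = ψ (indicatorVectorMeasure ν A) - δ * ν.real A :=
    fun A hA => by
      simp [s, Measure.toSignedMeasure_apply_measurable hA]
      rfl
  obtain ⟨B, hB, hpos, hneg⟩ := s.exists_compl_positive_negative
  refine ⟨B, hB, fun A hA hAB => ?_, fun A hA hAB => ?_⟩
  · have := (VectorMeasure.restrict_le_restrict_iff _ _ hB).mp hpos hA hAB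
    rw [zero_apply, hs A hA] at this
    linarith
  · have := (VectorMeasure.restrict_le_restrict_iff _ _ hB.compl).mp hneg hA hAB
    rw [zero_apply, hs A hA] at this
    linarith

end L1

end MeasureTheory

theorem lattice_hom_L1_restriction_iso_general {Ω Z : Type} [MeasurableSpace Ω]
    (ν : Measure Ω) [IsFiniteMeasure ν]
    [NormedAddCommGroup Z] [Lattice Z] [HasSolidNorm Z] [IsOrderedAddMonoid Z] [NormedSpace ℝ Z]
    (T : Lp ℝ 1 ν →L[ℝ] Z) (hlat : ∀ f g : Lp ℝ 1 ν, T (f ⊔ g) = T f ⊔ T g)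
    (hT : T ≠ 0) :
    ∃ B : Set Ω, MeasurableSet B ∧ 0 < ν B ∧
      ∃ δ : ℝ, 0 < δ ∧
        ∀ f : Lp ℝ 1 ν, (∀ᵐ x ∂ν, x ∉ B → (f : Ω → ℝ) x = 0) →
          δ * ‖f‖ ≤ ‖T f‖ := by
  obtain ⟨A₀, hA₀, hTA₀⟩ := exists_map_indicatorVectorMeasure_ne_zero hT
  obtain ⟨φ, hφ, hφA₀⟩ := exists_dual_vector ℝ _ (norm_ne_zero_iff.mpr hTA₀)
  obtain ⟨δ, hδ, hδA₀⟩ := exists_pos_mul_lt (norm_pos_iff.mpr hTA₀) (ν.real A₀)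
  obtain ⟨B, hB, hpos, hneg⟩ := exists_hahn_decomposition_sub_smul (φ.comp T) δ
  refine ⟨B, hB, pos_iff_ne_zero.mpr fun hB₀ => ?_, δ, hδ, fun f hf => ?_⟩
  · have hsplit := (indicatorVectorMeasure ν).of_add_of_sdiff (hA₀.inter hB) hA₀
      inter_subset_left
    rw [indicatorVectorMeasure_of_measure_eq_zero (measure_mono_null inter_subset_right hB₀),
      zero_add] at hsplit
    have hA₀B := hneg _ (hA₀.diff (hA₀.inter hB)) fun x hx hxB => hx.2 ⟨hx.1, hxB⟩
    rw [hsplit, ContinuousLinearMap.comp_apply, hφA₀, RCLike.ofReal_real_eq_id, id] at hA₀B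
    have := measureReal_mono (μ := ν) (sdiff_subset (s := A₀) (t := A₀ ∩ B))
    nlinarith
  · have hTabs : T |f| = |T f| := by
      rw [abs, abs, hlat, map_neg]
    have hfB : ∀ᵐ x ∂ν, x ∉ B → (|f| : Lp ℝ 1 ν) x = 0 := by
      filter_upwards [hf, Lp.coeFn_abs f] with x hfx hfabs hx
      rw [hfabs, hfx hx, abs_zero]
    calc δ * ‖f‖ = δ * ‖|f|‖ := by rw [norm_abs_eq_norm]
      _ ≤ φ (T |f|) := mul_norm_le_of_mul_measureReal_le (φ.comp T) hB hpos (abs_nonneg f) hfB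
      _ ≤ ‖T |f|‖ := (le_abs_self _).trans (by simpa [hφ] using φ.le_opNorm (T |f|))
      _ = ‖T f‖ := by rw [hTabs, norm_abs_eq_norm]

/-- If `T : L₁(ν) → Z` is a non-zero lattice homomorphism from the `L₁` space
of a finite measure into a Banach lattice, then there is a measurable set `B`
of positive measure such that the restriction of `T` to the ideal `L₁(B)` of
functions supported on `B` is a lattice isomorphism onto its range, i.e.
bounded below. -/
theorem lattice_hom_L1_restriction_iso {Ω Z : Type} [MeasurableSpace Ω]
    (ν : Measure Ω) [IsFiniteMeasure ν]
    [NormedAddCommGroup Z] [Lattice Z] [HasSolidNorm Z] [IsOrderedAddMonoid Z] [NormedSpace ℝ Z] [CompleteSpace Z]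
    (T : Lp ℝ 1 ν →L[ℝ] Z) (hlat : ∀ f g : Lp ℝ 1 ν, T (f ⊔ g) = T f ⊔ T g)
    (hT : T ≠ 0) :
    ∃ B : Set Ω, MeasurableSet B ∧ 0 < ν B ∧
      ∃ δ : ℝ, 0 < δ ∧
        ∀ f : Lp ℝ 1 ν, (∀ᵐ x ∂ν, x ∉ B → (f : Ω → ℝ) x = 0) →
          δ * ‖f‖ ≤ ‖T f‖ :=
  lattice_hom_L1_restriction_iso_general ν T hlat hT
end

section
/- L₁[0,1] is not separably 𝓑𝓛-injective: there exist separable Banach lattices X ⊆ Y (namely X the sublattice of L₁([0,1]²) of functions depending only on the first coordinate, inside Y = L₁([0,1]²)) and a lattice homomorphism T : X → L₁[0,1] admitting no lattice homomorphism extension T̂ : Y → L₁[0,1]. -/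
/-!
Suppose `T̂` were such an extension. Cut the square into `n` horizontal strips `B_k` and put
`h_k = T̂ 1_{B_k} ≥ 0`. Since `∑ 1_{B_k} = 1` depends only on the first coordinate, `∑ h_k = 1`,
and as `T̂` fixes `h_k ∘ fst`, the function `f = ∑ (h_k ∘ fst) ⊓ 1_{B_k}` is mapped to
`∑ h_k ⊓ h_k = 1`. But `‖f‖₁ ≤ ∑ ‖h_k‖₁ / n = ‖∑ h_k‖₁ / n = 1 / n`, so `‖T̂‖ ≥ n` for every `n`.
-/

open MeasureTheory Set

section LatticeHom

variable {E F G : Type*} [AddCommGroup E] [Lattice E] [AddCommGroup F] [Lattice F]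
  [FunLike G E F] [AddMonoidHomClass G E F]

theorem map_inf_of_map_sup [IsOrderedAddMonoid E] [IsOrderedAddMonoid F]
    (T : G) (hsup : ∀ x y, T (x ⊔ y) = T x ⊔ T y) (x y : E) : T (x ⊓ y) = T x ⊓ T y := by
  have h := congrArg T (inf_add_sup x y)
  rw [map_add, map_add, hsup, ← inf_add_sup (T x) (T y)] at h
  exact add_right_cancel h

theorem map_nonneg_of_map_sup (T : G) (hsup : ∀ x y, T (x ⊔ y) = T x ⊔ T y) {x : E}
    (hx : 0 ≤ x) : 0 ≤ T x := by
  simpa [sup_eq_left.mpr hx] using hsup x 0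

end LatticeHom

theorem MeasureTheory.Lp.coeFn_finset_sum {α E ι : Type*} [MeasurableSpace α]
    [NormedAddCommGroup E] {p : ENNReal} {μ : Measure α} (s : Finset ι) (f : ι → Lp E p μ) :
    ⇑(∑ i ∈ s, f i) =ᵐ[μ] ∑ i ∈ s, ⇑(f i) := by
  classical
  induction s using Finset.induction_on with
  | empty => simpa using Lp.coeFn_zero E p μ
  | insert i s hi ih =>
    simp only [Finset.sum_insert hi]
    exact (Lp.coeFn_add _ _).trans ih.add_left

theorem MeasureTheory.L1.norm_eq_integral_of_nonneg_s16 {α : Type*} [MeasurableSpace α]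
    {μ : Measure α} {f : Lp ℝ 1 μ} (hf : 0 ≤ f) : ‖f‖ = L1.integralCLM f := by
  rw [L1.norm_eq_integral_norm, ← L1.integral_def, L1.integral_eq_integral]
  refine integral_congr_ae ?_
  filter_upwards [(Lp.coeFn_nonneg f).mpr hf] with x hx using Real.norm_of_nonneg hx

theorem MeasureTheory.L1.norm_sum_of_nonneg {α ι : Type*} [MeasurableSpace α] {μ : Measure α}
    (s : Finset ι) {f : ι → Lp ℝ 1 μ} (hf : ∀ i ∈ s, 0 ≤ f i) : ‖∑ i ∈ s, f i‖ = ∑ i ∈ s, ‖f i‖ := by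
  rw [L1.norm_eq_integral_of_nonneg_s16 (Finset.sum_nonneg hf), map_sum]
  exact Finset.sum_congr rfl fun i hi => (L1.norm_eq_integral_of_nonneg_s16 (hf i hi)).symm

theorem MeasureTheory.Lp.norm_eq_one_of_ae_eq_one {α : Type*} [MeasurableSpace α] {μ : Measure α}
    [IsProbabilityMeasure μ] {p : ENNReal} (hp : p ≠ 0) {f : Lp ℝ p μ}
    (hf : f =ᵐ[μ] fun _ => (1 : ℝ)) : ‖f‖ = 1 := by
  simp [Lp.norm_def, eLpNorm_congr_ae hf, eLpNorm_const _ hp (IsProbabilityMeasure.ne_zero μ)]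

theorem sum_indicator_Ioc_of_monotone {α M : Type*} [LinearOrder α] [AddCommMonoid M]
    {x : ℕ → α} (hx : Monotone x) (f : α → M) (n : ℕ) :
    ∑ k ∈ Finset.range n, (Ioc (x k) (x (k + 1))).indicator f = (Ioc (x 0) (x n)).indicator f := by
  induction n with
  | zero => simp only [Finset.sum_range_zero, Ioc_self, indicator_empty']
  | succ n ih =>
    rw [Finset.sum_range_succ, ih, ← Ioc_union_Ioc_eq_Ioc (hx n.zero_le) (hx n.le_succ),
      indicator_union_of_disjoint (Ioc_disjoint_Ioc_of_le le_rfl)]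
    rfl

section Product

variable {α β : Type*} [MeasurableSpace α] [MeasurableSpace β] {μ : Measure α} {ν : Measure β}

theorem norm_inf_le_of_ae_eq_fst_of_ae_eq_indicator_snd [IsFiniteMeasure ν] {h : Lp ℝ 1 μ}
    (hh : 0 ≤ h) {s : Set β} (hs : MeasurableSet s) {a b : Lp ℝ 1 (μ.prod ν)}
    (ha : a =ᵐ[μ.prod ν] fun p => h p.1)
    (hb : b =ᵐ[μ.prod ν] (Prod.snd ⁻¹' s).indicator fun _ => 1) :
    ‖a ⊓ b‖ ≤ ‖h‖ * ν.real s := by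
  have hpoint : ∀ᵐ p ∂μ.prod ν, ‖(a ⊓ b) p‖ₑ ≤ ‖h p.1‖ₑ * s.indicator (fun _ => 1) p.2 := by
    filter_upwards [Lp.coeFn_inf a b, ha, hb,
      Measure.quasiMeasurePreserving_fst.ae ((Lp.coeFn_nonneg h).mpr hh)]
      with p hinf hfst hind hnonneg
    rw [hinf, Pi.inf_apply, hfst, hind]
    by_cases hp : p.2 ∈ s
    · have : p ∈ Prod.snd ⁻¹' s := hp
      rw [indicator_of_mem hp, indicator_of_mem this, mul_one,
        Real.enorm_of_nonneg (le_inf hnonneg zero_le_one), Real.enorm_of_nonneg hnonneg]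
      exact ENNReal.ofReal_le_ofReal inf_le_left
    · have : p ∉ Prod.snd ⁻¹' s := hp
      simpa [indicator_of_notMem hp, indicator_of_notMem this] using hnonneg
  have hint : ∫⁻ p, ‖h p.1‖ₑ * s.indicator (fun _ => 1) p.2 ∂μ.prod ν = eLpNorm h 1 μ * ν s := by
    rw [lintegral_prod_mul (Lp.aestronglyMeasurable h).enorm (aemeasurable_const.indicator hs),
      eLpNorm_one_eq_lintegral_enorm, lintegral_indicator_const hs, one_mul]
  rw [Lp.norm_def, Lp.norm_def, measureReal_def, ← ENNReal.toReal_mul, ← hint]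
  refine ENNReal.toReal_mono ?_ ?_
  · rw [hint]; exact ENNReal.mul_ne_top (Lp.eLpNorm_ne_top h) (measure_ne_top ν s)
  · rw [eLpNorm_one_eq_lintegral_enorm]
    exact lintegral_mono_ae hpoint

theorem one_le_opNorm_mul_of_partition [IsProbabilityMeasure μ] [IsProbabilityMeasure ν]
    (T : Lp ℝ 1 (μ.prod ν) →L[ℝ] Lp ℝ 1 μ)
    (hsup : ∀ f g, T (f ⊔ g) = T f ⊔ T g)
    (hext : ∀ (f : Lp ℝ 1 (μ.prod ν)) (g : α → ℝ), (f =ᵐ[μ.prod ν] fun p => g p.1) → T f =ᵐ[μ] g)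
    {ι : Type*} (t : Finset ι) {S : ι → Set β} (hS : ∀ i, MeasurableSet (S i))
    (hcover : ∀ᵐ y ∂ν, ∑ i ∈ t, (S i).indicator (fun _ => (1 : ℝ)) y = 1)
    {ε : ℝ} (hε : ∀ i ∈ t, ν.real (S i) ≤ ε) :
    1 ≤ ‖T‖ * ε := by
  set b : ι → Lp ℝ 1 (μ.prod ν) := fun i =>
    indicatorConstLp 1 (measurable_snd (hS i)) (measure_ne_top _ _) 1
  set h : ι → Lp ℝ 1 μ := fun i => T (b i)
  set a : ι → Lp ℝ 1 (μ.prod ν) := fun i =>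
    Lp.compMeasurePreserving Prod.fst measurePreserving_fst (h i)
  have hb : ∀ i, b i =ᵐ[μ.prod ν] (Prod.snd ⁻¹' S i).indicator fun _ => 1 :=
    fun i => indicatorConstLp_coeFn
  have hh : ∀ i, 0 ≤ h i := by
    refine fun i => map_nonneg_of_map_sup T hsup ((Lp.coeFn_nonneg _).1 ?_)
    filter_upwards [hb i] with p hp
    rw [hp]
    exact indicator_nonneg (fun _ _ => zero_le_one) p
  have hTa : ∀ i, T (a i) = h i := fun i =>
    Lp.ext (hext _ _ (Lp.coeFn_compMeasurePreserving _ _))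
  have hsum_b : ⇑(∑ i ∈ t, b i) =ᵐ[μ.prod ν] fun _ => 1 := by
    filter_upwards [Lp.coeFn_finset_sum t b, (Filter.eventually_all_finset t).2 fun i _ => hb i,
      Measure.quasiMeasurePreserving_snd.ae hcover] with p hsum hbp hcov
    rw [hsum, Finset.sum_apply, ← hcov]
    exact Finset.sum_congr rfl fun i hi => hbp i hi
  have hnorm : ‖T (∑ i ∈ t, b i)‖ = 1 :=
    Lp.norm_eq_one_of_ae_eq_one one_ne_zero (hext _ _ hsum_b)
  have hTf : T (∑ i ∈ t, a i ⊓ b i) = T (∑ i ∈ t, b i) := by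
    simp only [map_sum, map_inf_of_map_sup T hsup, hTa]
    exact Finset.sum_congr rfl fun i _ => inf_idem (h i)
  calc 1 = ‖T (∑ i ∈ t, a i ⊓ b i)‖ := by rw [hTf, hnorm]
    _ ≤ ‖T‖ * ‖∑ i ∈ t, a i ⊓ b i‖ := T.le_opNorm _
    _ ≤ ‖T‖ * ∑ i ∈ t, ‖h i‖ * ε := by
      gcongr
      refine (norm_sum_le _ _).trans (Finset.sum_le_sum fun i hi => ?_)
      calc ‖a i ⊓ b i‖ ≤ ‖h i‖ * ν.real (S i) :=
            norm_inf_le_of_ae_eq_fst_of_ae_eq_indicator_snd (hh i) (hS i)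
              (Lp.coeFn_compMeasurePreserving _ _) (hb i)
        _ ≤ ‖h i‖ * ε := by gcongr; exact hε i hi
    _ = ‖T‖ * ε := by
      rw [← Finset.sum_mul, ← L1.norm_sum_of_nonneg t fun i _ => hh i, ← map_sum, hnorm, one_mul]

end Product

instance : IsProbabilityMeasure (volume.restrict (Icc (0 : ℝ) 1)) :=
  ⟨by simp [Real.volume_Icc]⟩

theorem ae_sum_indicator_Ioc_div_eq_one {n : ℕ} (hn : n ≠ 0) :
    ∀ᵐ y ∂volume.restrict (Icc (0 : ℝ) 1),
      ∑ k ∈ Finset.range n, (Ioc ((k : ℝ) / n) ((k + 1 : ℕ) / n)).indicator (fun _ => (1 : ℝ)) y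
        = 1 := by
  have hmono : Monotone fun k : ℕ => (k : ℝ) / n := fun _ _ hij =>
    div_le_div_of_nonneg_right (Nat.cast_le.2 hij) n.cast_nonneg
  rw [← Measure.restrict_congr_set Ioc_ae_eq_Icc]
  filter_upwards [ae_restrict_mem measurableSet_Ioc] with y hy
  rw [← Finset.sum_apply, sum_indicator_Ioc_of_monotone hmono, Nat.cast_zero, zero_div,
    div_self (Nat.cast_ne_zero.2 hn), indicator_of_mem hy]

theorem volume_restrict_Icc_real_Ioc_div_le (n k : ℕ) :
    (volume.restrict (Icc (0 : ℝ) 1)).real (Ioc ((k : ℝ) / n) ((k + 1 : ℕ) / n)) ≤ 1 / n := by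
  rw [measureReal_restrict_apply measurableSet_Ioc]
  refine (measureReal_mono inter_subset_left (by simp [Real.volume_Ioc])).trans_eq ?_
  rw [Real.volume_real_Ioc, Nat.cast_succ, ← sub_div, add_sub_cancel_left, max_eq_left (by positivity)]

/-- `L₁[0,1]` is not separably `𝓑𝓛`-injective: inside the separable Banach
lattice `Y = L₁([0,1]²)` consider the closed sublattice `X` of functions
depending only on the first coordinate, and the lattice homomorphism
`T : X → L₁[0,1]` identifying such a function with a function of one variable.
Then `T` admits no lattice homomorphism extension `T̂ : Y → L₁[0,1]`; i.e.
there is no lattice homomorphism `T̂ : L₁([0,1]²) → L₁[0,1]` such that whenever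
`f ∈ L₁([0,1]²)` equals `g ∘ fst` a.e. for some `g : ℝ → ℝ`, then `T̂ f = g`
a.e. -/
theorem L1_not_separably_BL_injective :
    ¬ ∃ T : Lp ℝ 1 (volume.restrict ((Set.Icc (0:ℝ) 1) ×ˢ (Set.Icc (0:ℝ) 1)))
          →L[ℝ] Lp ℝ 1 (volume.restrict (Set.Icc (0:ℝ) 1)),
        (∀ f g, T (f ⊔ g) = T f ⊔ T g) ∧
        ∀ (f : Lp ℝ 1 (volume.restrict ((Set.Icc (0:ℝ) 1) ×ˢ (Set.Icc (0:ℝ) 1))))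
          (g : ℝ → ℝ),
          ((f : ℝ × ℝ → ℝ) =ᵐ[volume.restrict ((Set.Icc (0:ℝ) 1) ×ˢ (Set.Icc (0:ℝ) 1))]
            fun p => g p.1) →
          ((T f : ℝ → ℝ) =ᵐ[volume.restrict (Set.Icc (0:ℝ) 1)] g) := by
  have hprod : volume.restrict (Icc (0 : ℝ) 1 ×ˢ Icc (0 : ℝ) 1) =
      (volume.restrict (Icc (0 : ℝ) 1)).prod (volume.restrict (Icc (0 : ℝ) 1)) := by
    rw [Measure.prod_restrict, Measure.volume_eq_prod]
  rw [hprod]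
  rintro ⟨T, hsup, hext⟩
  obtain ⟨n, hn⟩ := exists_nat_gt ‖T‖
  have hn0 : (0 : ℝ) < n := (norm_nonneg T).trans_lt hn
  have key := one_le_opNorm_mul_of_partition T hsup hext (Finset.range n)
    (fun _ => measurableSet_Ioc) (ae_sum_indicator_Ioc_div_eq_one (Nat.cast_pos.1 hn0).ne')
    fun k _ => volume_restrict_Icc_real_Ioc_div_le n k
  rw [mul_one_div, le_div_iff₀ hn0, one_mul] at key
  exact hn.not_ge key
end
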